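/- arXiv:1109.3265 — 6 statements merged into one kernel-verified Lean document; each statement's English description precedes it below -/
import Mathlib

section
/- Let A ⊆ [0,1]² be pseudo-convex with an admissible convex covering A₁,…,A_p with p parts, of which q parts are convex subsets of A. Then for any N points x₀,…,x_{N−1} ∈ [0,1]², the absolute difference |(1/N)∑_{n=0}^{N−1} 1_A(x_n) − λ(A)| is at most (2p − q)·J_N, where J_N is the isotropic discrepancy of the point set. -/
open MeasureTheory
open scoped Classical

/-- The unit square in `ℝ²`. -/
def unitSq : Set (EuclideanSpace ℝ (Fin 2)) := {x | ∀ i, x i ∈ Set.Icc (0 : ℝ) 1}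

/-- Local discrepancy of a point set with respect to a set `A`. -/
noncomputable def locDisc (N : ℕ) (x : Fin N → EuclideanSpace ℝ (Fin 2))
    (A : Set (EuclideanSpace ℝ (Fin 2))) : ℝ :=
  |(∑ n, if x n ∈ A then (1 : ℝ) else 0) / N - (volume A).toReal|

/-- Isotropic discrepancy: supremum of local discrepancies over all convex subsets
of the unit square. -/
noncomputable def isoDisc (N : ℕ) (x : Fin N → EuclideanSpace ℝ (Fin 2)) : ℝ :=
  ⨆ A : {A : Set (EuclideanSpace ℝ (Fin 2)) // Convex ℝ A ∧ A ⊆ unitSq},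
    locDisc N x A

/-!
Split `A` into the disjoint pieces `S j ∩ A`. The signed discrepancy (count fraction minus
volume) is additive over disjoint null-measurable sets, so the local discrepancy of `A` is at
most the sum of those of the pieces. A piece with `S j ⊆ A` is convex and costs at most `J_N`;
any other piece is the difference `S j \ (S j \ A)` of two nested convex sets, whose signed
discrepancies subtract, so it costs at most `2 J_N`. Summing gives `q J_N + 2 (p - q) J_N`.
-/

open Set

section SignedDiscrepancy

variable {α : Type*} [MeasurableSpace α] (μ : Measure α) {N : ℕ} (x : Fin N → α)

noncomputable def signedDisc (B : Set α) : ℝ :=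
  (∑ n, B.indicator 1 (x n)) / N - (μ B).toReal

variable {μ}

lemma signedDisc_union {B C : Set α} (hBC : Disjoint B C) (hC : NullMeasurableSet C μ)
    (hB_fin : μ B ≠ ⊤) (hC_fin : μ C ≠ ⊤) :
    signedDisc μ x (B ∪ C) = signedDisc μ x B + signedDisc μ x C := by
  simp only [signedDisc, indicator_union_of_disjoint hBC, Finset.sum_add_distrib,
    measure_union₀ hC hBC.aedisjoint, ENNReal.toReal_add hB_fin hC_fin]
  ring

lemma signedDisc_iUnion {ι : Type*} [Fintype ι] {B : ι → Set α}
    (hdisj : Pairwise (Function.onFun Disjoint B)) (hB : ∀ i, NullMeasurableSet (B i) μ)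
    (hB_fin : ∀ i, μ (B i) ≠ ⊤) :
    signedDisc μ x (⋃ i, B i) = ∑ i, signedDisc μ x (B i) := by
  have hcount (y : α) :
      (⋃ i, B i).indicator (1 : α → ℝ) y = ∑ i, (B i).indicator 1 y := by
    simpa using
      Finset.indicator_biUnion_apply Finset.univ B (fun i _ j _ hij => hdisj hij) y
  simp only [signedDisc, hcount, measure_iUnion₀ (hdisj.mono fun _ _ h => h.aedisjoint) hB,
    tsum_fintype, ENNReal.toReal_sum fun i _ => hB_fin i, Finset.sum_sub_distrib,
    Finset.sum_div]
  rw [Finset.sum_comm]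

lemma abs_signedDisc_le {B K : Set α} (hBK : B ⊆ K) (hK : μ K ≠ ⊤) :
    |signedDisc μ x B| ≤ 1 + (μ K).toReal := by
  have hcount : ∑ n, B.indicator (1 : α → ℝ) (x n) ≤ N := by
    simpa using Finset.sum_le_sum fun n (_ : n ∈ Finset.univ) =>
      indicator_le_self' (f := (1 : α → ℝ)) (fun _ _ => zero_le_one) (x n)
  have hfrac_nonneg : 0 ≤ (∑ n, B.indicator (1 : α → ℝ) (x n)) / N :=
    div_nonneg (Finset.sum_nonneg fun _ _ => indicator_nonneg (fun _ _ => zero_le_one) _)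
      N.cast_nonneg
  have hfrac_le : (∑ n, B.indicator (1 : α → ℝ) (x n)) / N ≤ 1 :=
    div_le_one_of_le₀ hcount N.cast_nonneg
  have hμB_le : (μ B).toReal ≤ (μ K).toReal := ENNReal.toReal_mono hK (measure_mono hBK)
  have hμB_nonneg : 0 ≤ (μ B).toReal := ENNReal.toReal_nonneg
  rw [signedDisc, abs_sub_le_iff]
  constructor <;> linarith

end SignedDiscrepancy

lemma Convex.nullMeasurableSet_inter_of_convex_diff {E : Type*} [NormedAddCommGroup E]
    [NormedSpace ℝ E] [MeasurableSpace E] [BorelSpace E] [FiniteDimensional ℝ E]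
    (μ : Measure E) [μ.IsAddHaarMeasure] {S A : Set E} (hS : Convex ℝ S)
    (hSA : Convex ℝ (S \ A)) : NullMeasurableSet (S ∩ A) μ := by
  rw [← sdiff_sdiff_right_self]
  exact (hS.nullMeasurableSet μ).diff (hSA.nullMeasurableSet μ)

lemma locDisc_eq_abs_signedDisc (N : ℕ) (x : Fin N → EuclideanSpace ℝ (Fin 2))
    (A : Set (EuclideanSpace ℝ (Fin 2))) : locDisc N x A = |signedDisc volume x A| :=
  rfl

lemma volume_unitSq : volume unitSq = 1 := by
  have hpi : unitSq = WithLp.ofLp ⁻¹' Icc 0 1 := by ext; simp [unitSq, Pi.le_def, forall_and]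
  rw [hpi, (PiLp.volume_preserving_ofLp (Fin 2)).measure_preimage
    measurableSet_Icc.nullMeasurableSet]
  simp [Real.volume_Icc_pi]

lemma volume_ne_top_of_subset_unitSq {B : Set (EuclideanSpace ℝ (Fin 2))} (hB : B ⊆ unitSq) :
    volume B ≠ ⊤ :=
  ne_top_of_le_ne_top (by simp [volume_unitSq]) (measure_mono hB)

lemma abs_signedDisc_le_isoDisc {N : ℕ} (x : Fin N → EuclideanSpace ℝ (Fin 2))
    {C : Set (EuclideanSpace ℝ (Fin 2))} (hC : Convex ℝ C) (hC_sq : C ⊆ unitSq) :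
    |signedDisc volume x C| ≤ isoDisc N x := by
  refine le_ciSup (f := fun C : {C // Convex ℝ C ∧ C ⊆ unitSq} => locDisc N x C)
    ⟨1 + (volume unitSq).toReal, ?_⟩ ⟨C, hC, hC_sq⟩
  rintro _ ⟨⟨C', -, hC'_sq⟩, rfl⟩
  exact abs_signedDisc_le x hC'_sq (volume_ne_top_of_subset_unitSq subset_rfl)

lemma abs_signedDisc_inter_le_two_mul_isoDisc {N : ℕ} (x : Fin N → EuclideanSpace ℝ (Fin 2))
    {S A : Set (EuclideanSpace ℝ (Fin 2))} (hS : Convex ℝ S) (hS_sq : S ⊆ unitSq)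
    (hSA : Convex ℝ (S \ A)) :
    |signedDisc volume x (S ∩ A)| ≤ 2 * isoDisc N x := by
  have hsplit :
      signedDisc volume x S = signedDisc volume x (S ∩ A) + signedDisc volume x (S \ A) := by
    conv_lhs => rw [← inter_union_sdiff S A]
    exact signedDisc_union x disjoint_sdiff_inter.symm (hSA.nullMeasurableSet volume)
      (volume_ne_top_of_subset_unitSq (inter_subset_left.trans hS_sq))
      (volume_ne_top_of_subset_unitSq (sdiff_subset.trans hS_sq))
  have hS_disc := abs_signedDisc_le_isoDisc x hS hS_sq
  have hSA_disc := abs_signedDisc_le_isoDisc x hSA (sdiff_subset.trans hS_sq)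
  calc |signedDisc volume x (S ∩ A)|
      = |signedDisc volume x S - signedDisc volume x (S \ A)| := by
        rw [hsplit, add_sub_cancel_right]
    _ ≤ |signedDisc volume x S| + |signedDisc volume x (S \ A)| := abs_sub _ _
    _ ≤ 2 * isoDisc N x := by linarith

theorem pseudo_convex_disc_general (N : ℕ) (x : Fin N → EuclideanSpace ℝ (Fin 2))
    (A : Set (EuclideanSpace ℝ (Fin 2)))
    (p q : ℕ) (S : Fin p → Set (EuclideanSpace ℝ (Fin 2)))
    (hdisj : Pairwise (Function.onFun Disjoint S))
    (hconv : ∀ j, Convex ℝ (S j))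
    (hsub : ∀ j, S j ⊆ unitSq)
    (hcover : A ⊆ ⋃ j, S j)
    (T : Finset (Fin p)) (hq : T.card = q)
    (hT : ∀ j ∈ T, S j ⊆ A)
    (hT' : ∀ j ∉ T, Convex ℝ (S j \ A)) :
    locDisc N x A ≤ (2 * (p : ℝ) - q) * isoDisc N x := by
  set J := isoDisc N x
  have hpieces : ⋃ j, S j ∩ A = A := by rw [← iUnion_inter, inter_eq_right.2 hcover]
  have hdiff_conv (j : Fin p) : Convex ℝ (S j \ A) := by
    by_cases hj : j ∈ T
    · rw [sdiff_eq_empty.2 (hT j hj)]; exact convex_empty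
    · exact hT' j hj
  have hpiece (j : Fin p) :
      |signedDisc volume x (S j ∩ A)| ≤ 2 * J - if j ∈ T then J else 0 := by
    by_cases hj : j ∈ T
    · rw [if_pos hj, inter_eq_left.2 (hT j hj)]
      linarith [abs_signedDisc_le_isoDisc x (hconv j) (hsub j)]
    · rw [if_neg hj, sub_zero]
      exact abs_signedDisc_inter_le_two_mul_isoDisc x (hconv j) (hsub j) (hdiff_conv j)
  calc locDisc N x A = |∑ j, signedDisc volume x (S j ∩ A)| := by
        rw [locDisc_eq_abs_signedDisc, ← signedDisc_iUnion x
          (hdisj.mono fun _ _ h => h.mono inter_subset_left inter_subset_left)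
          (fun j => (hconv j).nullMeasurableSet_inter_of_convex_diff volume (hdiff_conv j))
          (fun j => volume_ne_top_of_subset_unitSq (inter_subset_left.trans (hsub j))), hpieces]
    _ ≤ ∑ j, |signedDisc volume x (S j ∩ A)| := Finset.abs_sum_le_sum_abs _ _
    _ ≤ ∑ j, (2 * J - if j ∈ T then J else 0) := Finset.sum_le_sum fun j _ => hpiece j
    _ = (2 * (p : ℝ) - q) * J := by
        simp only [Finset.sum_sub_distrib, Finset.sum_ite_mem, Finset.univ_inter,
          Finset.sum_const, Finset.card_univ, Fintype.card_fin, nsmul_eq_mul, hq]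
        ring

/-- A pseudo-convex set with an admissible convex covering of `p` parts,
`q` of which are convex parts of `A`, has local discrepancy at most
`(2p - q)` times the isotropic discrepancy. -/
theorem pseudo_convex_disc (N : ℕ) (x : Fin N → EuclideanSpace ℝ (Fin 2))
    (A : Set (EuclideanSpace ℝ (Fin 2))) (hA : A ⊆ unitSq)
    (p q : ℕ) (S : Fin p → Set (EuclideanSpace ℝ (Fin 2)))
    (hdisj : Pairwise (Function.onFun Disjoint S))
    (hconv : ∀ j, Convex ℝ (S j))
    (hsub : ∀ j, S j ⊆ unitSq)
    (hcover : A ⊆ ⋃ j, S j)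
    (T : Finset (Fin p)) (hq : T.card = q)
    (hT : ∀ j ∈ T, S j ⊆ A)
    (hT' : ∀ j ∉ T, Convex ℝ (S j \ A)) :
    locDisc N x A ≤ (2 * (p : ℝ) - q) * isoDisc N x :=
  pseudo_convex_disc_general N x A p q S hdisj hconv hsub hcover T hq hT hT'
end

section
/- Let A be a convex subset of [0,1]². Then the set of points of [0,1]² \ A at distance at most δ from A has Lebesgue measure at most 4δ, and the set of points of A at distance at most δ from [0,1]² \ A has Lebesgue measure at most 4δ. -/
open MeasureTheory

/-!
Let `C = closure A` and `collar = [0, 1]² \ [δ, 1 - δ]²`. Outside `C`, the unit vector `u x`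
pointing away from the nearest point of `C` is the gradient of the convex function `infDist · C`,
hence monotone, so `x ↦ x + δ • u x` does not decrease distances, and therefore does not decrease
area. It maps `[δ, 1 - δ]² \ C` into the part of the square at distance `> δ` from `C`; comparing
the area of `[0, 1]² \ C` with that of its image gives `area (outer shell) ≤ area (collar \ C)`.
Inside `A`, pushing `x` by `δ` towards the nearest point of `Aᶜ` (the gradient of the concave
function `infDist · Aᶜ` on `A`) is again expanding and maps the inner shell within `[δ, 1 - δ]²`
into the outer shell, so `area (inner shell) ≤ area (collar \ C) + area (collar ∩ C) ≤ 4δ`.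
-/

open Metric Set Module Measure
open scoped RealInnerProductSpace

section Geometry

variable {F : Type*} [NormedAddCommGroup F] [InnerProductSpace ℝ F]

theorem dist_le_dist_add_smul_of_subgradient {s : Set F} {f : F → ℝ} {g : F → F}
    (hg : ∀ x ∈ s, ∀ y ∈ s, f x + ⟪g x, y - x⟫ ≤ f y) {δ : ℝ} (hδ : 0 ≤ δ)
    {x y : F} (hx : x ∈ s) (hy : y ∈ s) :
    dist x y ≤ dist (x + δ • g x) (y + δ • g y) := by
  have hmono : 0 ≤ ⟪x - y, g x - g y⟫ := by
    have h₁ := hg x hx y hy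
    have h₂ := hg y hy x hx
    rw [← neg_sub x y, inner_neg_right] at h₁
    rw [inner_sub_right, real_inner_comm, real_inner_comm (g y)]
    linarith
  have hexpand : ‖x - y + δ • (g x - g y)‖ ^ 2
      = ‖x - y‖ ^ 2 + 2 * δ * ⟪x - y, g x - g y⟫ + δ ^ 2 * ‖g x - g y‖ ^ 2 := by
    rw [norm_add_sq_real, real_inner_smul_right, norm_smul, Real.norm_of_nonneg hδ]
    ring
  rw [dist_eq_norm, dist_eq_norm,
    show x + δ • g x - (y + δ • g y) = x - y + δ • (g x - g y) by module]
  refine le_of_sq_le_sq ?_ (norm_nonneg _)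
  rw [hexpand]
  have := mul_nonneg (mul_nonneg zero_le_two hδ) hmono
  nlinarith [sq_nonneg δ, sq_nonneg ‖g x - g y‖]

theorem inner_sub_le_infDist {C : Set F} (hC : C.Nonempty) {p u : F} (hu : ‖u‖ ≤ 1)
    (hsupp : ∀ z ∈ C, ⟪z - p, u⟫ ≤ 0) (y : F) : ⟪y - p, u⟫ ≤ infDist y C := by
  refine (le_infDist hC).2 fun z hz => ?_
  calc ⟪y - p, u⟫ ≤ ⟪y - p, u⟫ - ⟪z - p, u⟫ := by linarith [hsupp z hz]
    _ = ⟪y - z, u⟫ := by rw [← inner_sub_left, sub_sub_sub_cancel_right]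
    _ ≤ ‖y - z‖ * ‖u‖ := real_inner_le_norm _ _
    _ ≤ dist y z := by
      rw [dist_eq_norm]; exact mul_le_of_le_one_right (norm_nonneg _) hu

theorem norm_inv_norm_smul_le_one (v : F) : ‖‖v‖⁻¹ • v‖ ≤ 1 := by
  rw [norm_smul, norm_inv, norm_norm]
  exact inv_mul_le_one

theorem inner_inv_norm_smul_self (v : F) : ⟪‖v‖⁻¹ • v, v⟫ = ‖v‖ := by
  rw [real_inner_smul_left, real_inner_self_eq_norm_sq, sq, ← mul_assoc, inv_mul_mul_self]

theorem Convex.infDist_add_inner_le_infDist {C : Set F} (hC : Convex ℝ C) {x p : F}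
    (hp : p ∈ C) (hxp : infDist x C = dist x p) (y : F) :
    infDist x C + ⟪‖x - p‖⁻¹ • (x - p), y - x⟫ ≤ infDist y C := by
  have hsupp : ∀ z ∈ C, ⟪x - p, z - p⟫ ≤ 0 := by
    refine (norm_eq_iInf_iff_real_inner_le_zero hC hp).1 ?_
    rw [← dist_eq_norm, ← hxp, infDist_eq_iInf]
    simp_rw [dist_eq_norm]
  have key := inner_sub_le_infDist ⟨p, hp⟩ (norm_inv_norm_smul_le_one (x - p))
    (fun z hz => by
      rw [real_inner_smul_right, real_inner_comm]
      exact mul_nonpos_of_nonneg_of_nonpos (inv_nonneg.2 (norm_nonneg _)) (hsupp z hz)) y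
  rw [show y - p = (y - x) + (x - p) by abel, inner_add_left, ← real_inner_comm (x - p),
    inner_inv_norm_smul_self, ← real_inner_comm (y - x)] at key
  linarith [dist_eq_norm x p]

theorem Convex.inner_sub_nonpos_of_ball_subset {A : Set F} (hA : Convex ℝ A) {x q : F}
    (hball : ball x (dist x q) ⊆ A) (hq : q ∉ interior A) {z : F} (hz : z ∈ closure A) :
    ⟪z - q, q - x⟫ ≤ 0 := by
  have hclosed : IsClosed {z | ⟪z - q, q - x⟫ ≤ 0} :=
    isClosed_le ((continuous_id.sub continuous_const).inner continuous_const) continuous_const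
  refine closure_minimal (fun z hz => show ⟪z - q, q - x⟫ ≤ 0 from ?_) hclosed hz
  by_contra! hpos
  set α := ⟪z - q, q - x⟫
  have hqz : 0 < ‖q - z‖ ^ 2 := by
    refine pow_pos (norm_pos_iff.2 (sub_ne_zero.2 fun h => ?_)) 2
    simp [α, h] at hpos
  -- pushing `q` slightly away from `z` lands inside the ball, so `q` lies on an open segment
  -- from an interior point of `A` to `z`
  set s := α / ‖q - z‖ ^ 2
  have hs : 0 < s := div_pos hpos hqz
  have hsα : s * ‖q - z‖ ^ 2 = α := div_mul_cancel₀ _ hqz.ne'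
  have hb : q + s • (q - z) ∈ interior A := by
    refine interior_maximal hball isOpen_ball ?_
    rw [mem_ball, dist_eq_norm, dist_eq_norm', ← sq_lt_sq₀ (norm_nonneg _) (norm_nonneg _),
      show q + s • (q - z) - x = (q - x) - s • (z - q) by module, norm_sub_sq_real,
      real_inner_smul_right, norm_smul, Real.norm_of_nonneg hs.le, real_inner_comm,
      norm_sub_rev z q]
    nlinarith
  refine hq (hA.openSegment_interior_self_subset_interior hb hz ?_)
  refine mem_openSegment_iff_div.2 ⟨1, s, one_pos, hs, ?_⟩
  rw [div_eq_inv_mul, div_eq_inv_mul, mul_smul, mul_smul, ← smul_add,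
    inv_smul_eq_iff₀ (by positivity)]
  module

theorem Convex.inner_sub_le_infDist_compl {A : Set F} (hA : Convex ℝ A) {x q : F}
    (hq : q ∈ closure Aᶜ) (hxq : infDist x Aᶜ = dist x q) {z : F} (hz : z ∈ closure A) :
    ⟪‖q - x‖⁻¹ • (q - x), z - x⟫ ≤ infDist x Aᶜ := by
  have hsupp := hA.inner_sub_nonpos_of_ball_subset (hxq ▸ ball_infDist_compl_subset)
    (by rwa [← mem_compl_iff, ← closure_compl]) hz
  have hsplit : ⟪‖q - x‖⁻¹ • (q - x), z - x⟫
      = ‖q - x‖⁻¹ * ⟪z - q, q - x⟫ + ‖q - x‖ := by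
    rw [show z - x = (z - q) + (q - x) by abel, inner_add_right, inner_inv_norm_smul_self,
      real_inner_smul_left, real_inner_comm]
  rw [hsplit, hxq, dist_eq_norm']
  have := mul_nonpos_of_nonneg_of_nonpos (inv_nonneg.2 (norm_nonneg (q - x))) hsupp
  linarith

theorem Convex.infDist_compl_add_inner_le {A : Set F} (hA : Convex ℝ A) {x q : F}
    (hx : x ∈ interior A) (hq : q ∈ closure Aᶜ) (hxq : infDist x Aᶜ = dist x q)
    {y : F} (hy : y ∈ A) :
    infDist y Aᶜ + ⟪‖q - x‖⁻¹ • (q - x), y - x⟫ ≤ infDist x Aᶜ := by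
  have hn : ‖‖q - x‖⁻¹ • (q - x)‖ = 1 :=
    norm_smul_inv_norm <| sub_ne_zero.2 fun h =>
      (interior_eq_compl_closure_compl (s := A) ▸ hx) (h ▸ hq)
  rw [← le_sub_iff_add_le]
  refine le_of_forall_lt_imp_le_of_dense fun t ht => ?_
  rcases lt_or_ge t 0 with ht0 | ht0
  · linarith [hA.inner_sub_le_infDist_compl hq hxq (subset_closure hy)]
  · have hyt : y + t • ‖q - x‖⁻¹ • (q - x) ∈ A := ball_infDist_compl_subset <| by
      rwa [add_mem_ball_iff_norm, norm_smul, hn, mul_one, Real.norm_of_nonneg ht0]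
    have h := hA.inner_sub_le_infDist_compl hq hxq (subset_closure hyt)
    rw [add_sub_right_comm, inner_add_right, real_inner_smul_right, real_inner_self_eq_norm_sq,
      hn] at h
    linarith

end Geometry

section Shells

variable {E : Type*} [NormedAddCommGroup E] [InnerProductSpace ℝ E] [FiniteDimensional ℝ E]
  [MeasurableSpace E] [BorelSpace E] (μ : Measure E) [μ.IsAddHaarMeasure]

theorem addHaar_le_addHaar_image_of_expanding {s : Set E} {f : E → E}
    (hf : ∀ x ∈ s, ∀ y ∈ s, dist x y ≤ dist (f x) (f y)) : μ s ≤ μ (f '' s) := by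
  have hanti : AntilipschitzWith 1 (f ∘ ((↑) : s → E)) :=
    AntilipschitzWith.of_le_mul_dist fun x y => by simpa [Subtype.dist_eq] using hf x x.2 y y.2
  have hH : μH[finrank ℝ E] s ≤ μH[finrank ℝ E] (f '' s) := by
    have := hanti.le_hausdorffMeasure_image (d := finrank ℝ E) (Nat.cast_nonneg _) univ
    rwa [image_comp, image_univ, Subtype.range_coe, ENNReal.coe_one, ENNReal.one_rpow, one_mul,
      ← (isometry_subtype_coe (s := s)).hausdorffMeasure_image (Or.inl (Nat.cast_nonneg _)),
      image_univ, Subtype.range_coe] at this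
  rw [isAddLeftInvariant_eq_smul μ μH[finrank ℝ E]]
  simp only [Measure.smul_apply]
  gcongr

theorem addHaar_le_add_sdiff_of_expanding {s T t : Set E} {f : E → E}
    (hf : ∀ x ∈ s ∩ T, ∀ y ∈ s ∩ T, dist x y ≤ dist (f x) (f y)) (hmaps : MapsTo f (s ∩ T) t) :
    μ s ≤ μ t + μ (s \ T) :=
  calc μ s ≤ μ (s ∩ T) + μ (s \ T) := measure_le_inter_add_sdiff μ s T
    _ ≤ μ t + μ (s \ T) := by
      gcongr ?_ + _
      exact (addHaar_le_addHaar_image_of_expanding μ hf).trans (measure_mono hmaps.image_subset)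

variable {Q T : Set E} {δ : ℝ}

theorem Convex.addHaar_outer_shell_le {C : Set E} (hC : Convex ℝ C) (hCc : IsClosed C)
    (hne : C.Nonempty) (hQ : μ Q ≠ ⊤) (hT : ∀ x ∈ T, closedBall x δ ⊆ Q) (hδ : 0 ≤ δ) :
    μ {x ∈ Q \ C | infDist x C ≤ δ} ≤ μ ((Q \ T) \ C) := by
  choose p hpC hpd using hCc.exists_infDist_eq_dist hne
  set u : E → E := fun x => ‖x - p x‖⁻¹ • (x - p x)
  set K := {x | infDist x C ≤ δ}
  have hgrad : ∀ x y, infDist x C + ⟪u x, y - x⟫ ≤ infDist y C := fun x y =>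
    hC.infDist_add_inner_le_infDist (hpC x) (hpd x) y
  have hmaps : MapsTo (fun x => x + δ • u x) ((Q \ C) ∩ T) (Q \ K) := by
    rintro x ⟨⟨-, hxC⟩, hxT⟩
    have hu : ‖u x‖ = 1 := norm_smul_inv_norm (sub_ne_zero.2 fun h => hxC (h ▸ hpC x))
    have hpush := hgrad x (x + δ • u x)
    rw [add_sub_cancel_left, real_inner_smul_right, real_inner_self_eq_norm_sq, hu] at hpush
    have hpos := (hCc.notMem_iff_infDist_pos hne).1 hxC
    refine ⟨hT x hxT ?_, fun hK => ?_⟩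
    · rw [add_mem_closedBall_iff_norm, norm_smul, hu, mul_one, Real.norm_of_nonneg hδ]
    · exact (show δ < infDist (x + δ • u x) C by linarith).not_ge hK
  have hshell := addHaar_le_add_sdiff_of_expanding μ
    (fun x _ y _ => dist_le_dist_add_smul_of_subgradient (s := univ) (fun x _ y _ => hgrad x y)
      hδ trivial trivial) hmaps
  have hK : MeasurableSet K :=
    (isClosed_le (continuous_infDist_pt C) continuous_const).measurableSet
  have hfar : (Q \ C) \ K = Q \ K := by
    refine sdiff_sdiff.trans (congrArg (Q \ ·) (union_eq_right.2 fun x hx => ?_))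
    exact (infDist_zero_of_mem hx).trans_le hδ
  refine ENNReal.le_of_add_le_add_right
    (ne_top_of_le_ne_top hQ (measure_mono (sdiff_subset : Q \ K ⊆ Q))) ?_
  calc μ ((Q \ C) ∩ K) + μ (Q \ K) = μ (Q \ C) := by
        rw [← hfar]; exact measure_inter_add_sdiff _ hK
    _ ≤ μ (Q \ K) + μ ((Q \ C) \ T) := hshell
    _ = μ ((Q \ T) \ C) + μ (Q \ K) := by rw [sdiff_sdiff_comm, add_comm]

theorem Convex.addHaar_inner_shell_le {A : Set E} (hA : Convex ℝ A) (hAQ : A ⊆ Q)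
    (hAc : Aᶜ.Nonempty) (hQ : μ Q ≠ ⊤) (hT : ∀ x ∈ T, closedBall x δ ⊆ Q) (hδ : 0 ≤ δ) :
    μ {x ∈ interior A | infDist x Aᶜ < δ} ≤ μ (Q \ T) := by
  rcases A.eq_empty_or_nonempty with rfl | hne
  · simp
  choose q hqA hqd using exists_mem_closure_infDist_eq_dist hAc
  set n : E → E := fun x => ‖q x - x‖⁻¹ • (q x - x)
  have hgrad : ∀ x ∈ interior A, ∀ y ∈ interior A,
      -infDist x Aᶜ + ⟪n x, y - x⟫ ≤ -infDist y Aᶜ := fun x hx y hy => by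
    linarith [hA.infDist_compl_add_inner_le hx (hqA x) (hqd x) (interior_subset hy)]
  have hmaps : MapsTo (fun x => x + δ • n x) ({x ∈ interior A | infDist x Aᶜ < δ} ∩ T)
      {x ∈ Q \ closure A | infDist x (closure A) ≤ δ} := by
    rintro x ⟨⟨hxA, hxδ⟩, hxT⟩
    have hn : ‖n x‖ = 1 := norm_smul_inv_norm <| sub_ne_zero.2 fun h =>
      (interior_eq_compl_closure_compl (s := A) ▸ hxA) (h ▸ hqA x)
    have hFx : dist (x + δ • n x) x = δ := by
      rw [dist_eq_norm, add_sub_cancel_left, norm_smul, hn, mul_one, Real.norm_of_nonneg hδ]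
    refine ⟨⟨hT x hxT (mem_closedBall.2 hFx.le), fun hmem => ?_⟩, ?_⟩
    · have h := hA.inner_sub_le_infDist_compl (hqA x) (hqd x) hmem
      rw [add_sub_cancel_left, real_inner_smul_right, real_inner_self_eq_norm_sq, hn] at h
      linarith
    · exact (infDist_le_dist_of_mem (subset_closure (interior_subset hxA))).trans hFx.le
  calc μ {x ∈ interior A | infDist x Aᶜ < δ}
      ≤ μ ((Q \ T) \ closure A) + μ ((Q \ T) ∩ closure A) := by
        refine (addHaar_le_add_sdiff_of_expanding μ (fun x hx y hy =>
          dist_le_dist_add_smul_of_subgradient hgrad hδ hx.1.1 hy.1.1) hmaps).trans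
          (add_le_add ?_ (measure_mono ?_))
        · exact hA.closure.addHaar_outer_shell_le μ isClosed_closure hne.closure hQ hT hδ
        · rintro x ⟨⟨hxA, -⟩, hxT⟩
          exact ⟨⟨hAQ (interior_subset hxA), hxT⟩, subset_closure (interior_subset hxA)⟩
    _ = μ (Q \ T) := measure_sdiff_add_inter _ isClosed_closure.measurableSet

end Shells

section Cube

def cube (ι : Type*) (a b : ℝ) : Set (EuclideanSpace ℝ ι) := {x | ∀ i, x i ∈ Icc a b}

variable {ι : Type*}

theorem cube_eq_preimage_ofLp (a b : ℝ) :
    cube ι a b = WithLp.ofLp ⁻¹' univ.pi fun _ => Icc a b := by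
  ext x; exact forall_congr' fun _ => by simp

theorem isClosed_cube (a b : ℝ) : IsClosed (cube ι a b) := by
  rw [cube_eq_preimage_ofLp]
  exact (isClosed_set_pi fun _ _ => isClosed_Icc).preimage (PiLp.continuous_ofLp 2 _)

theorem volume_cube [Fintype ι] (a b : ℝ) :
    volume (cube ι a b) = ENNReal.ofReal (b - a) ^ Fintype.card ι := by
  rw [cube_eq_preimage_ofLp, (PiLp.volume_preserving_ofLp ι).measure_preimage
    (MeasurableSet.univ_pi fun _ => measurableSet_Icc).nullMeasurableSet, volume_pi_pi]
  simp [Real.volume_Icc]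

theorem closedBall_subset_cube [Fintype ι] {a b δ : ℝ} {x : EuclideanSpace ℝ ι}
    (hx : x ∈ cube ι (a + δ) (b - δ)) : closedBall x δ ⊆ cube ι a b := by
  intro y hy i
  have hyi : |y i - x i| ≤ δ :=
    (PiLp.norm_apply_le (y - x) i).trans (mem_closedBall_iff_norm.1 hy)
  have := hx i
  rw [abs_le] at hyi
  constructor <;> linarith [this.1, this.2]

theorem volume_cube_sdiff_le [Fintype ι] {δ : ℝ} (hδ : 0 ≤ δ) :
    volume (cube ι 0 1 \ cube ι δ (1 - δ)) ≤ ENNReal.ofReal (2 * Fintype.card ι * δ) := by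
  have hsub : cube ι δ (1 - δ) ⊆ cube ι 0 1 := fun x hx i =>
    ⟨hδ.trans (hx i).1, (hx i).2.trans (by linarith)⟩
  rw [measure_sdiff hsub (isClosed_cube _ _).measurableSet.nullMeasurableSet
    (by simp [volume_cube]), volume_cube, volume_cube, tsub_le_iff_right, sub_zero,
    ENNReal.ofReal_one, one_pow]
  rcases le_or_gt 0 (1 - δ - δ) with h | h
  · rw [← ENNReal.ofReal_pow h, ← ENNReal.ofReal_add (by positivity) (by positivity)]
    refine ENNReal.one_le_ofReal.2 ?_
    have := one_add_mul_le_pow (a := -2 * δ) (by linarith) (Fintype.card ι)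
    rw [show 1 - δ - δ = 1 + -2 * δ by ring]
    linarith
  · rcases (Fintype.card ι).eq_zero_or_pos with hn | hn
    · simp [hn]
    · refine le_add_right (ENNReal.one_le_ofReal.2 ?_)
      have : (1 : ℝ) ≤ Fintype.card ι := Nat.one_le_cast.2 hn
      nlinarith

variable [Fintype ι] {A : Set (EuclideanSpace ℝ ι)} {δ : ℝ}

theorem Convex.volume_outer_shell_cube_le (hA : Convex ℝ A) (hδ : 0 ≤ δ) :
    volume {x ∈ cube ι 0 1 \ A | ∃ y ∈ A, dist x y ≤ δ} ≤
      ENNReal.ofReal (2 * Fintype.card ι * δ) := by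
  rcases A.eq_empty_or_nonempty with rfl | hne
  · simp
  have hcover : {x ∈ cube ι 0 1 \ A | ∃ y ∈ A, dist x y ≤ δ} ⊆ frontier A ∪
      {x ∈ cube ι 0 1 \ closure A | infDist x (closure A) ≤ δ} := by
    rintro x ⟨⟨hxQ, hxA⟩, y, hy, hxy⟩
    by_cases hxC : x ∈ closure A
    · exact Or.inl ⟨hxC, fun h => hxA (interior_subset h)⟩
    · exact Or.inr ⟨⟨hxQ, hxC⟩, (infDist_le_dist_of_mem (subset_closure hy)).trans hxy⟩
  calc _ ≤ volume (frontier A) +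
        volume {x ∈ cube ι 0 1 \ closure A | infDist x (closure A) ≤ δ} :=
        (measure_mono hcover).trans (measure_union_le _ _)
    _ ≤ volume ((cube ι 0 1 \ cube ι δ (1 - δ)) \ closure A) := by
        rw [hA.addHaar_frontier volume, zero_add]
        exact hA.closure.addHaar_outer_shell_le volume isClosed_closure hne.closure
          (by simp [volume_cube]) (fun x hx => closedBall_subset_cube (by simpa using hx)) hδ
    _ ≤ ENNReal.ofReal (2 * Fintype.card ι * δ) :=
        (measure_mono sdiff_subset).trans (volume_cube_sdiff_le hδ)

theorem Convex.volume_inner_shell_cube_le (hA : Convex ℝ A) (hsub : A ⊆ cube ι 0 1)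
    (hδ : 0 ≤ δ) :
    volume {x ∈ A | ∃ y ∈ cube ι 0 1 \ A, dist x y ≤ δ} ≤
      ENNReal.ofReal (2 * Fintype.card ι * δ) := by
  rcases (cube ι 0 1 \ A).eq_empty_or_nonempty with hfull | ⟨z, -, hz⟩
  · simp [hfull]
  -- a point at distance exactly `δ` from `Aᶜ` may be pushed onto `frontier A`: hence `δ' ↓ δ`
  have hbound : ∀ δ' > δ, volume {x ∈ A | ∃ y ∈ cube ι 0 1 \ A, dist x y ≤ δ} ≤
      ENNReal.ofReal (2 * Fintype.card ι * δ') := by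
    intro δ' hδ'
    have hcover : {x ∈ A | ∃ y ∈ cube ι 0 1 \ A, dist x y ≤ δ} ⊆
        frontier A ∪ {x ∈ interior A | infDist x Aᶜ < δ'} := by
      rintro x ⟨hxA, y, ⟨-, hy⟩, hxy⟩
      by_cases hxi : x ∈ interior A
      · exact Or.inr ⟨hxi, ((infDist_le_dist_of_mem hy).trans hxy).trans_lt hδ'⟩
      · exact Or.inl ⟨subset_closure hxA, hxi⟩
    calc _ ≤ volume (frontier A) + volume {x ∈ interior A | infDist x Aᶜ < δ'} :=
          (measure_mono hcover).trans (measure_union_le _ _)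
      _ ≤ volume (cube ι 0 1 \ cube ι δ' (1 - δ')) := by
          rw [hA.addHaar_frontier volume, zero_add]
          exact hA.addHaar_inner_shell_le volume hsub ⟨z, hz⟩ (by simp [volume_cube])
            (fun x hx => closedBall_subset_cube (by simpa using hx)) (hδ.trans hδ'.le)
      _ ≤ ENNReal.ofReal (2 * Fintype.card ι * δ') := volume_cube_sdiff_le (hδ.trans hδ'.le)
  refine ge_of_tendsto (x := nhdsWithin δ (Ioi δ)) ?_ (eventually_nhdsWithin_of_forall hbound)
  exact ((ENNReal.continuous_ofReal.comp (continuous_const.mul continuous_id)).tendsto δ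
    |>.mono_left nhdsWithin_le_nhds)

end Cube

/-- For a convex subset `A` of the unit square, the `δ`-neighbourhood of its boundary
has measure at most `4δ` on each side. -/
theorem convex_boundary_neighbourhood (A : Set (EuclideanSpace ℝ (Fin 2)))
    (hA : Convex ℝ A) (hsub : A ⊆ unitSq) (δ : ℝ) (hδ : 0 < δ) :
    volume {x ∈ unitSq \ A | ∃ y ∈ A, dist x y ≤ δ} ≤ ENNReal.ofReal (4 * δ) ∧
    volume {x ∈ A | ∃ y ∈ unitSq \ A, dist x y ≤ δ} ≤ ENNReal.ofReal (4 * δ) := by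
  have hfour : (2 * Fintype.card (Fin 2) * δ : ℝ) = 4 * δ := by norm_num
  exact ⟨hfour ▸ hA.volume_outer_shell_cube_le hδ.le,
    hfour ▸ hA.volume_inner_shell_cube_le hsub hδ.le⟩
end

section
/- For the first N points P_N of a (0,2)-sequence in base b, the isotropic discrepancy satisfies J_N(P_N) ≤ 4√2 (b² + b^{3/2}) / √N. -/
open MeasureTheory
open scoped Classical

def elemInterval (b d₁ d₂ a₁ a₂ : ℕ) : Set (EuclideanSpace ℝ (Fin 2)) :=
  {z | z 0 ∈ Set.Ico ((a₁ : ℝ) / b ^ d₁) ((a₁ + 1 : ℝ) / b ^ d₁) ∧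
       z 1 ∈ Set.Ico ((a₂ : ℝ) / b ^ d₂) ((a₂ + 1 : ℝ) / b ^ d₂)}

/-- `x` is a `(0,2)`-sequence in base `b`: every block `x_{kb^m},…,x_{(k+1)b^m−1}`
is a `(0,m,2)`-net in base `b`. -/
def IsZeroTwoSeq (b : ℕ) (x : ℕ → EuclideanSpace ℝ (Fin 2)) : Prop :=
  (∀ n i, x n i ∈ Set.Ico (0 : ℝ) 1) ∧
  ∀ m k : ℕ, 0 < m → ∀ d₁ d₂ : ℕ, d₁ + d₂ = m → ∀ a₁ < b ^ d₁, ∀ a₂ < b ^ d₂,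
    ∃! n, n ∈ Finset.Ico (k * b ^ m) ((k + 1) * b ^ m) ∧ x n ∈ elemInterval b d₁ d₂ a₁ a₂

/-!
For a convex `A` and a `K₁ × K₂` grid of `[0,1)²`, the cells met by `A` but not contained in it
number at most `4 (K₁ + K₂)`: at a point of such a cell outside `A` some open quadrant misses `A`,
and the cells of each quadrant type form an antichain of the grid. A net for the grid therefore
counts `A` with error at most `4 (K₁ + K₂)`, so a block of `b ^ m` consecutive points of a
`(0,2)`-sequence, a net for `K₁ = b ^ ⌈m/2⌉`, `K₂ = b ^ ⌊m/2⌋`, has counting error at most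
`4 (√b + 1) √b ^ m`. Splitting the first `N` points along the base-`b` digits of `N` into such
blocks and summing the geometric series gives the counting error `4 (√b + 1)² √b √N`.
-/

open Finset

local notation "ℝ²" => EuclideanSpace ℝ (Fin 2)

theorem convex_setOf_apply_lt {ι : Type*} (i : ι) (c : ℝ) :
    Convex ℝ {w : EuclideanSpace ℝ ι | c < w i} :=
  convex_halfSpace_gt (f := fun w : EuclideanSpace ℝ ι => w i) ⟨fun _ _ => rfl, fun _ _ => rfl⟩ c

theorem convex_setOf_apply_gt {ι : Type*} (i : ι) (c : ℝ) :
    Convex ℝ {w : EuclideanSpace ℝ ι | w i < c} :=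
  convex_halfSpace_lt (f := fun w : EuclideanSpace ℝ ι => w i) ⟨fun _ _ => rfl, fun _ _ => rfl⟩ c

theorem convex_setOf_apply_eq {ι : Type*} (i : ι) (c : ℝ) :
    Convex ℝ {w : EuclideanSpace ℝ ι | w i = c} :=
  convex_hyperplane (f := fun w : EuclideanSpace ℝ ι => w i) ⟨fun _ _ => rfl, fun _ _ => rfl⟩ c

theorem Convex.mem_of_quadrants {A : Set ℝ²} (hA : Convex ℝ A) {z : ℝ²}
    (hNE : ∃ q ∈ A, z 0 < q 0 ∧ z 1 < q 1) (hSE : ∃ q ∈ A, z 0 < q 0 ∧ q 1 < z 1)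
    (hSW : ∃ q ∈ A, q 0 < z 0 ∧ q 1 < z 1) (hNW : ∃ q ∈ A, q 0 < z 0 ∧ z 1 < q 1) :
    z ∈ A := by
  obtain ⟨q₁, hq₁, hq₁0, hq₁1⟩ := hNE
  obtain ⟨q₂, hq₂, hq₂0, hq₂1⟩ := hSE
  obtain ⟨q₃, hq₃, hq₃0, hq₃1⟩ := hSW
  obtain ⟨q₄, hq₄, hq₄0, hq₄1⟩ := hNW
  -- points of `A` at height `z 1` to the right and to the left of `z`, then `z` between them
  have hcoord : ∀ i, Continuous fun w : ℝ² => w i := fun i => by fun_prop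
  obtain ⟨r, ⟨hrA, hr0⟩, hr1⟩ := (hA.inter (convex_setOf_apply_lt 0 (z 0))).isPreconnected
    |>.intermediate_value ⟨hq₂, hq₂0⟩ ⟨hq₁, hq₁0⟩ (hcoord 1).continuousOn ⟨hq₂1.le, hq₁1.le⟩
  obtain ⟨l, ⟨hlA, hl0⟩, hl1⟩ := (hA.inter (convex_setOf_apply_gt 0 (z 0))).isPreconnected
    |>.intermediate_value ⟨hq₃, hq₃0⟩ ⟨hq₄, hq₄0⟩ (hcoord 1).continuousOn ⟨hq₃1.le, hq₄1.le⟩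
  obtain ⟨w, ⟨hwA, hw1⟩, hw0⟩ := (hA.inter (convex_setOf_apply_eq 1 (z 1))).isPreconnected
    |>.intermediate_value ⟨hlA, hl1⟩ ⟨hrA, hr1⟩ (hcoord 0).continuousOn ⟨hl0.le, hr0.le⟩
  have hwz : w = z := by
    ext i
    fin_cases i
    exacts [hw0, hw1]
  exact hwz ▸ hwA

def rect (I J : Set ℝ) : Set ℝ² := {z | z 0 ∈ I ∧ z 1 ∈ J}

theorem rect_eq_preimage (I J : Set ℝ) :
    rect I J = (MeasurableEquiv.toLp 2 (Fin 2 → ℝ)).symm ⁻¹' Set.univ.pi ![I, J] := by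
  ext z
  simp [rect, MeasurableEquiv.toLp_symm_apply, Set.mem_pi, Fin.forall_fin_two]

theorem measurableSet_rect {I J : Set ℝ} (hI : MeasurableSet I) (hJ : MeasurableSet J) :
    MeasurableSet (rect I J) := by
  rw [rect_eq_preimage]
  exact (MeasurableEquiv.toLp 2 (Fin 2 → ℝ)).symm.measurable
    (MeasurableSet.univ_pi (Fin.forall_fin_two.2 ⟨hI, hJ⟩))

theorem volume_rect {I J : Set ℝ} (hI : MeasurableSet I) (hJ : MeasurableSet J) :
    volume (rect I J) = volume I * volume J := by
  rw [rect_eq_preimage,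
    (EuclideanSpace.volume_preserving_symm_measurableEquiv_toLp (Fin 2)).measure_preimage
      (MeasurableSet.univ_pi (Fin.forall_fin_two.2 ⟨hI, hJ⟩)).nullMeasurableSet,
    volume_pi_pi, Fin.prod_univ_two]
  rfl

def grid (K₁ K₂ : ℕ) : Finset (ℕ × ℕ) := range K₁ ×ˢ range K₂

def gridCell (K₁ K₂ : ℕ) (p : ℕ × ℕ) : Set ℝ² :=
  rect (Set.Ico (p.1 / K₁) ((p.1 + 1) / K₁)) (Set.Ico (p.2 / K₂) ((p.2 + 1) / K₂))

noncomputable def gridIndex (K₁ K₂ : ℕ) (z : ℝ²) : ℕ × ℕ := (⌊z 0 * K₁⌋₊, ⌊z 1 * K₂⌋₊)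

noncomputable def innerCells (K₁ K₂ : ℕ) (A : Set ℝ²) : Finset (ℕ × ℕ) :=
  {p ∈ grid K₁ K₂ | gridCell K₁ K₂ p ⊆ A}

noncomputable def outerCells (K₁ K₂ : ℕ) (A : Set ℝ²) : Finset (ℕ × ℕ) :=
  {p ∈ grid K₁ K₂ | (gridCell K₁ K₂ p ∩ A).Nonempty}

-- used with `Q z w` saying that `w` lies in a fixed open quadrant at `z`
noncomputable def quadrantCells (K₁ K₂ : ℕ) (A : Set ℝ²) (Q : ℝ² → ℝ² → Prop) : Finset (ℕ × ℕ) :=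
  {p ∈ outerCells K₁ K₂ A | ∃ z ∈ gridCell K₁ K₂ p, ∀ w ∈ A, ¬Q z w}

theorem elemInterval_eq_gridCell (b d₁ d₂ a₁ a₂ : ℕ) :
    elemInterval b d₁ d₂ a₁ a₂ = gridCell (b ^ d₁) (b ^ d₂) (a₁, a₂) := by
  simp [elemInterval, gridCell, rect]

theorem mem_Ico_div_iff_floor_eq {K a : ℕ} {t : ℝ} (hK : 0 < K) (ht : 0 ≤ t) :
    t ∈ Set.Ico (a / K : ℝ) ((a + 1) / K) ↔ ⌊t * K⌋₊ = a := by
  have hK' : (0 : ℝ) < K := Nat.cast_pos.2 hK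
  rw [Nat.floor_eq_iff (by positivity), Set.mem_Ico, div_le_iff₀ hK', lt_div_iff₀ hK']

theorem lt_of_mem_Ico_div {K a c : ℕ} {t u : ℝ} (ht : t ∈ Set.Ico (a / K : ℝ) ((a + 1) / K))
    (hu : u ∈ Set.Ico (c / K : ℝ) ((c + 1) / K)) (hac : a < c) : t < u :=
  calc t < (a + 1) / K := ht.2
    _ ≤ c / K := by gcongr; exact_mod_cast hac
    _ ≤ u := hu.1

section Grid

variable {K₁ K₂ : ℕ} {A : Set ℝ²}

theorem nonneg_of_mem_gridCell {p : ℕ × ℕ} {z : ℝ²} (hz : z ∈ gridCell K₁ K₂ p)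
    (i : Fin 2) : 0 ≤ z i := by
  fin_cases i
  exacts [le_trans (by positivity) hz.1.1, le_trans (by positivity) hz.2.1]

theorem mem_gridCell_iff (hK₁ : 0 < K₁) (hK₂ : 0 < K₂) {p : ℕ × ℕ} {z : ℝ²} (hz : ∀ i, 0 ≤ z i) :
    z ∈ gridCell K₁ K₂ p ↔ gridIndex K₁ K₂ z = p := by
  rw [gridCell, rect, Set.mem_ofPred_eq, mem_Ico_div_iff_floor_eq hK₁ (hz 0),
    mem_Ico_div_iff_floor_eq hK₂ (hz 1), gridIndex, Prod.ext_iff]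

theorem mem_gridCell_gridIndex (hK₁ : 0 < K₁) (hK₂ : 0 < K₂) {z : ℝ²} (hz : ∀ i, 0 ≤ z i) :
    z ∈ gridCell K₁ K₂ (gridIndex K₁ K₂ z) :=
  (mem_gridCell_iff hK₁ hK₂ hz).2 rfl

theorem gridIndex_mem_grid (hK₁ : 0 < K₁) (hK₂ : 0 < K₂) {z : ℝ²}
    (hz : ∀ i, z i ∈ Set.Ico (0 : ℝ) 1) : gridIndex K₁ K₂ z ∈ grid K₁ K₂ := by
  have hfloor : ∀ {K : ℕ} {t : ℝ}, 0 < K → t ∈ Set.Ico (0 : ℝ) 1 → ⌊t * K⌋₊ < K := fun hK ht =>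
    (Nat.floor_lt (mul_nonneg ht.1 (Nat.cast_nonneg _))).2
      (mul_lt_of_lt_one_left (Nat.cast_pos.2 hK) ht.2)
  simp only [grid, gridIndex, mem_product, mem_range]
  exact ⟨hfloor hK₁ (hz 0), hfloor hK₂ (hz 1)⟩

theorem pairwise_disjoint_gridCell (hK₁ : 0 < K₁) (hK₂ : 0 < K₂) :
    Pairwise (Function.onFun Disjoint (gridCell K₁ K₂)) := by
  intro p q hpq
  refine Set.disjoint_left.2 fun z hzp hzq => hpq ?_
  have hz := nonneg_of_mem_gridCell hzp
  rw [← (mem_gridCell_iff hK₁ hK₂ hz).1 hzp, (mem_gridCell_iff hK₁ hK₂ hz).1 hzq]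

theorem volume_gridCell (p : ℕ × ℕ) :
    volume (gridCell K₁ K₂ p) = ENNReal.ofReal ((K₁ * K₂ : ℝ)⁻¹) := by
  simp only [gridCell, volume_rect measurableSet_Ico measurableSet_Ico, Real.volume_Ico, add_div,
    add_sub_cancel_left, one_div, mul_inv]
  rw [ENNReal.ofReal_mul (by positivity)]

theorem volume_biUnion_gridCell (hK₁ : 0 < K₁) (hK₂ : 0 < K₂) (T : Finset (ℕ × ℕ)) :
    volume (⋃ p ∈ T, gridCell K₁ K₂ p) = #T * ENNReal.ofReal ((K₁ * K₂ : ℝ)⁻¹) := by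
  rw [measure_biUnion_finset ((pairwise_disjoint_gridCell hK₁ hK₂).set_pairwise _)
    fun _ _ => measurableSet_rect measurableSet_Ico measurableSet_Ico]
  simp [volume_gridCell]

theorem card_innerCells_mul_le_volume (hK₁ : 0 < K₁) (hK₂ : 0 < K₂) :
    #(innerCells K₁ K₂ A) * ENNReal.ofReal ((K₁ * K₂ : ℝ)⁻¹) ≤ volume A := by
  rw [← volume_biUnion_gridCell hK₁ hK₂]
  exact measure_mono (Set.iUnion₂_subset fun p hp => (mem_filter.1 hp).2)

theorem volume_le_card_outerCells_mul (hK₁ : 0 < K₁) (hK₂ : 0 < K₂) (hA : A ⊆ unitSq) :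
    volume A ≤ #(outerCells K₁ K₂ A) * ENNReal.ofReal ((K₁ * K₂ : ℝ)⁻¹) := by
  have hedges : volume (rect {1} Set.univ ∪ rect Set.univ {1}) = 0 :=
    measure_union_null (by simp [volume_rect]) (by simp [volume_rect])
  have hcover : A ⊆ (⋃ p ∈ outerCells K₁ K₂ A, gridCell K₁ K₂ p) ∪
      (rect {1} Set.univ ∪ rect Set.univ {1}) := by
    intro z hz
    by_cases hedge : z 0 = 1 ∨ z 1 = 1
    · exact Or.inr (hedge.imp (⟨·, trivial⟩) (⟨trivial, ·⟩))
    have hz' : ∀ i, z i ∈ Set.Ico (0 : ℝ) 1 := fun i => by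
      have := hA hz i
      fin_cases i <;> simp_all [lt_iff_le_and_ne]
    have hcell := mem_gridCell_gridIndex hK₁ hK₂ fun i => (hz' i).1
    exact Or.inl <|
      Set.mem_biUnion (mem_filter.2 ⟨gridIndex_mem_grid hK₁ hK₂ hz', z, hcell, hz⟩) hcell
  calc volume A ≤ volume (⋃ p ∈ outerCells K₁ K₂ A, gridCell K₁ K₂ p) + 0 :=
        (measure_mono hcover).trans (hedges ▸ measure_union_le _ _)
    _ = _ := by rw [add_zero, volume_biUnion_gridCell hK₁ hK₂]

theorem card_innerCells_le_mul_volume_le_card_outerCells (hK₁ : 0 < K₁) (hK₂ : 0 < K₂)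
    (hA : A ⊆ unitSq) :
    (#(innerCells K₁ K₂ A) : ℝ) ≤ K₁ * K₂ * (volume A).toReal ∧
      K₁ * K₂ * (volume A).toReal ≤ #(outerCells K₁ K₂ A) := by
  have hK : (0 : ℝ) < K₁ * K₂ := by positivity
  have hfin := ((volume_le_card_outerCells_mul hK₁ hK₂ hA).trans_lt
    (ENNReal.mul_lt_top (ENNReal.natCast_lt_top _) ENNReal.ofReal_lt_top)).ne
  have hlo := ENNReal.toReal_mono hfin (card_innerCells_mul_le_volume hK₁ hK₂ (A := A))
  have hhi := ENNReal.toReal_mono (ENNReal.mul_ne_top (ENNReal.natCast_ne_top _)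
    ENNReal.ofReal_ne_top) (volume_le_card_outerCells_mul hK₁ hK₂ hA)
  simp only [ENNReal.toReal_mul, ENNReal.toReal_natCast, ENNReal.toReal_ofReal (inv_nonneg.2 hK.le),
    ← div_eq_mul_inv] at hlo hhi
  rw [div_le_iff₀ hK] at hlo
  rw [le_div_iff₀ hK] at hhi
  constructor <;> linarith

theorem card_le_of_forall_not_lt_lt {S : Finset (ℕ × ℕ)} (hS : S ⊆ grid K₁ K₂)
    (h : ∀ p ∈ S, ∀ q ∈ S, ¬(p.1 < q.1 ∧ p.2 < q.2)) : #S ≤ K₁ + K₂ := by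
  have hS' : ∀ p ∈ S, p.1 < K₁ ∧ p.2 < K₂ := fun p hp => by simpa [grid] using hS hp
  simpa using card_le_card_of_injOn (t := range (K₁ + K₂)) (fun p => p.1 + (K₂ - p.2))
    (fun p hp => by have := hS' p hp; simp only [coe_range, Set.mem_Iio]; omega)
    (fun p hp q hq hpq => by
      have := hS' p hp; have := hS' q hq; have := h p hp q hq; have := h q hq p hp
      simp only at hpq
      exact Prod.ext (by omega) (by omega))

theorem card_le_of_forall_not_lt_gt {S : Finset (ℕ × ℕ)} (hS : S ⊆ grid K₁ K₂)
    (h : ∀ p ∈ S, ∀ q ∈ S, ¬(p.1 < q.1 ∧ q.2 < p.2)) : #S ≤ K₁ + K₂ := by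
  have hS' : ∀ p ∈ S, p.1 < K₁ ∧ p.2 < K₂ := fun p hp => by simpa [grid] using hS hp
  simpa using card_le_card_of_injOn (t := range (K₁ + K₂)) (fun p => p.1 + p.2)
    (fun p hp => by have := hS' p hp; simp only [coe_range, Set.mem_Iio]; omega)
    (fun p hp q hq hpq => by
      have := h p hp q hq; have := h q hq p hp
      simp only at hpq
      exact Prod.ext (by omega) (by omega))

theorem not_forall_of_mem_quadrantCells {Q : ℝ² → ℝ² → Prop}
    {p q : ℕ × ℕ} (hp : p ∈ quadrantCells K₁ K₂ A Q) (hq : q ∈ quadrantCells K₁ K₂ A Q) :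
    ¬∀ z ∈ gridCell K₁ K₂ p, ∀ w ∈ gridCell K₁ K₂ q, Q z w := fun hQ => by
  obtain ⟨-, z, hz, hfree⟩ := mem_filter.1 hp
  obtain ⟨w, hwq, hwA⟩ := (mem_filter.1 (mem_filter.1 hq).1).2
  exact hfree w hwA (hQ z hz w hwq)

/-- At a point of a boundary cell lying outside `A`, one of the four open quadrants misses `A`;
the boundary cells of each quadrant type form an antichain of the grid. -/
theorem card_outerCells_le (hA : Convex ℝ A) :
    #(outerCells K₁ K₂ A) ≤ #(innerCells K₁ K₂ A) + 4 * (K₁ + K₂) := by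
  set NE := quadrantCells K₁ K₂ A fun z w => z 0 < w 0 ∧ z 1 < w 1
  set SE := quadrantCells K₁ K₂ A fun z w => z 0 < w 0 ∧ w 1 < z 1
  set SW := quadrantCells K₁ K₂ A fun z w => w 0 < z 0 ∧ w 1 < z 1
  set NW := quadrantCells K₁ K₂ A fun z w => w 0 < z 0 ∧ z 1 < w 1
  have hsub : outerCells K₁ K₂ A ⊆ innerCells K₁ K₂ A ∪ (NE ∪ SE ∪ SW ∪ NW) := by
    intro p hp
    by_cases hin : gridCell K₁ K₂ p ⊆ A
    · exact mem_union_left _ (mem_filter.2 ⟨(mem_filter.1 hp).1, hin⟩)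
    obtain ⟨z, hz, hzA⟩ := Set.not_subset.1 hin
    by_contra hout
    simp only [mem_union, not_or] at hout
    obtain ⟨-, ⟨⟨hNE, hSE⟩, hSW⟩, hNW⟩ := hout
    refine hzA (hA.mem_of_quadrants ?_ ?_ ?_ ?_) <;> by_contra hfree
    exacts [hNE (mem_filter.2 ⟨hp, z, hz, fun w hw hQ => hfree ⟨w, hw, hQ⟩⟩),
      hSE (mem_filter.2 ⟨hp, z, hz, fun w hw hQ => hfree ⟨w, hw, hQ⟩⟩),
      hSW (mem_filter.2 ⟨hp, z, hz, fun w hw hQ => hfree ⟨w, hw, hQ⟩⟩),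
      hNW (mem_filter.2 ⟨hp, z, hz, fun w hw hQ => hfree ⟨w, hw, hQ⟩⟩)]
  have hgrid : ∀ Q, quadrantCells K₁ K₂ A Q ⊆ grid K₁ K₂ :=
    fun _ => (filter_subset _ _).trans (filter_subset _ _)
  have hNE : #NE ≤ K₁ + K₂ := card_le_of_forall_not_lt_lt (hgrid _) fun p hp q hq h =>
    not_forall_of_mem_quadrantCells hp hq fun z hz w hw =>
      ⟨lt_of_mem_Ico_div hz.1 hw.1 h.1, lt_of_mem_Ico_div hz.2 hw.2 h.2⟩
  have hSW : #SW ≤ K₁ + K₂ := card_le_of_forall_not_lt_lt (hgrid _) fun p hp q hq h =>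
    not_forall_of_mem_quadrantCells hq hp fun z hz w hw =>
      ⟨lt_of_mem_Ico_div hw.1 hz.1 h.1, lt_of_mem_Ico_div hw.2 hz.2 h.2⟩
  have hSE : #SE ≤ K₁ + K₂ := card_le_of_forall_not_lt_gt (hgrid _) fun p hp q hq h =>
    not_forall_of_mem_quadrantCells hp hq fun z hz w hw =>
      ⟨lt_of_mem_Ico_div hz.1 hw.1 h.1, lt_of_mem_Ico_div hw.2 hz.2 h.2⟩
  have hNW : #NW ≤ K₁ + K₂ := card_le_of_forall_not_lt_gt (hgrid _) fun p hp q hq h =>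
    not_forall_of_mem_quadrantCells hq hp fun z hz w hw =>
      ⟨lt_of_mem_Ico_div hw.1 hz.1 h.1, lt_of_mem_Ico_div hz.2 hw.2 h.2⟩
  have := card_le_card hsub
  have := card_union_le (innerCells K₁ K₂ A) (NE ∪ SE ∪ SW ∪ NW)
  have := card_union_le (NE ∪ SE ∪ SW) NW
  have := card_union_le (NE ∪ SE) SW
  have := card_union_le NE SE
  omega

end Grid

def IsGridNet (K₁ K₂ : ℕ) (s : Finset ℕ) (x : ℕ → ℝ²) : Prop :=
  ∀ p ∈ grid K₁ K₂, ∃! n, n ∈ s ∧ x n ∈ gridCell K₁ K₂ p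

namespace IsGridNet

variable {K₁ K₂ : ℕ} {s : Finset ℕ} {x : ℕ → ℝ²} {A : Set ℝ²}

theorem card_innerCells_le (hnet : IsGridNet K₁ K₂ s x) (hK₁ : 0 < K₁) (hK₂ : 0 < K₂) :
    #(innerCells K₁ K₂ A) ≤ #{n ∈ s | x n ∈ A} := by
  refine (card_le_card fun p hp => ?_).trans (card_image_le (f := fun n => gridIndex K₁ K₂ (x n)))
  obtain ⟨hpG, hpA⟩ := mem_filter.1 hp
  obtain ⟨n, ⟨hn, hnp⟩, -⟩ := hnet p hpG
  exact mem_image.2 ⟨n, mem_filter.2 ⟨hn, hpA hnp⟩,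
    (mem_gridCell_iff hK₁ hK₂ (nonneg_of_mem_gridCell hnp)).1 hnp⟩

theorem card_filter_le_card_outerCells (hnet : IsGridNet K₁ K₂ s x) (hK₁ : 0 < K₁) (hK₂ : 0 < K₂)
    (hx : ∀ n ∈ s, ∀ i, x n i ∈ Set.Ico (0 : ℝ) 1) :
    #{n ∈ s | x n ∈ A} ≤ #(outerCells K₁ K₂ A) := by
  have hcell : ∀ n ∈ s, x n ∈ gridCell K₁ K₂ (gridIndex K₁ K₂ (x n)) := fun n hn =>
    mem_gridCell_gridIndex hK₁ hK₂ fun i => (hx n hn i).1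
  refine card_le_card_of_injOn (fun n => gridIndex K₁ K₂ (x n)) (fun n hn => ?_)
    fun n hn m hm h => ?_
  · obtain ⟨hns, hnA⟩ := mem_filter.1 hn
    exact mem_filter.2 ⟨gridIndex_mem_grid hK₁ hK₂ (hx n hns), x n, hcell n hns, hnA⟩
  · have hns := (mem_filter.1 hn).1
    have hms := (mem_filter.1 hm).1
    refine (hnet _ (gridIndex_mem_grid hK₁ hK₂ (hx n hns))).unique ⟨hns, hcell n hns⟩ ⟨hms, ?_⟩
    exact (show gridIndex K₁ K₂ (x n) = gridIndex K₁ K₂ (x m) from h) ▸ hcell m hms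

theorem abs_card_sub_mul_volume_le (hnet : IsGridNet K₁ K₂ s x) (hK₁ : 0 < K₁) (hK₂ : 0 < K₂)
    (hx : ∀ n ∈ s, ∀ i, x n i ∈ Set.Ico (0 : ℝ) 1) (hA : Convex ℝ A) (hAs : A ⊆ unitSq) :
    |(#{n ∈ s | x n ∈ A} : ℝ) - K₁ * K₂ * (volume A).toReal| ≤ 4 * (K₁ + K₂) := by
  have hinner : (#(innerCells K₁ K₂ A) : ℝ) ≤ #{n ∈ s | x n ∈ A} :=
    Nat.cast_le.2 (hnet.card_innerCells_le hK₁ hK₂)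
  have houter : (#{n ∈ s | x n ∈ A} : ℝ) ≤ #(outerCells K₁ K₂ A) :=
    Nat.cast_le.2 (hnet.card_filter_le_card_outerCells hK₁ hK₂ hx)
  have hboundary : (#(outerCells K₁ K₂ A) : ℝ) ≤ #(innerCells K₁ K₂ A) + 4 * (K₁ + K₂) := by
    exact_mod_cast card_outerCells_le hA
  have hvol := card_innerCells_le_mul_volume_le_card_outerCells hK₁ hK₂ hAs
  rw [abs_le]
  constructor <;> linarith [hvol.1, hvol.2]

end IsGridNet

noncomputable def blockDisc (x : ℕ → ℝ²) (A : Set ℝ²) (o n : ℕ) : ℝ :=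
  |(#{i ∈ Ico o (o + n) | x i ∈ A} : ℝ) - n * (volume A).toReal|

theorem blockDisc_zero (x : ℕ → ℝ²) (A : Set ℝ²) (o : ℕ) : blockDisc x A o 0 = 0 := by
  simp [blockDisc]

theorem blockDisc_add_le (x : ℕ → ℝ²) (A : Set ℝ²) (o c d : ℕ) :
    blockDisc x A o (c + d) ≤ blockDisc x A o c + blockDisc x A (o + c) d := by
  have hsplit : Ico o (o + (c + d)) = Ico o (o + c) ∪ Ico (o + c) (o + c + d) := by
    rw [Ico_union_Ico_eq_Ico (by omega) (by omega), add_assoc]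
  rw [blockDisc, hsplit, filter_union, card_union_of_disjoint
    (disjoint_filter_filter (Ico_disjoint_Ico_consecutive _ _ _))]
  push_cast
  exact (abs_add_le _ _).trans_eq' (by ring_nf)

theorem locDisc_eq_blockDisc_div (x : ℕ → ℝ²) (A : Set ℝ²) {N : ℕ} (hN : 0 < N) :
    locDisc N (fun n : Fin N => x n) A = blockDisc x A 0 N / N := by
  have hN' : (0 : ℝ) < N := Nat.cast_pos.2 hN
  have hcount : (∑ n : Fin N, if x n ∈ A then (1 : ℝ) else 0) = #{i ∈ Ico 0 (0 + N) | x i ∈ A} := by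
    rw [Fin.sum_univ_eq_sum_range (fun n => if x n ∈ A then (1 : ℝ) else 0), sum_boole,
      zero_add, range_eq_Ico]
  rw [locDisc, blockDisc, hcount, ← abs_of_pos hN', ← abs_div, abs_of_pos hN', sub_div,
    mul_div_cancel_left₀ _ hN'.ne']

theorem IsZeroTwoSeq.isGridNet {b : ℕ} {x : ℕ → ℝ²} (hx : IsZeroTwoSeq b x) {m d₁ d₂ o : ℕ}
    (hd : d₁ + d₂ = m) (ho : b ^ m ∣ o) : IsGridNet (b ^ d₁) (b ^ d₂) (Ico o (o + b ^ m)) x := by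
  obtain ⟨k, rfl⟩ := ho
  intro p hp
  rcases Nat.eq_zero_or_pos m with rfl | hm
  · obtain ⟨rfl, rfl⟩ : d₁ = 0 ∧ d₂ = 0 := by omega
    obtain rfl : p = (0, 0) := by simpa [grid] using hp
    refine ⟨k, ⟨by simp, ?_⟩, fun n hn => by simpa using hn.1⟩
    simpa [gridCell, rect] using ⟨hx.1 k 0, hx.1 k 1⟩
  · have hp' : p.1 < b ^ d₁ ∧ p.2 < b ^ d₂ := by simpa [grid] using hp
    have hblock : Ico (b ^ m * k) (b ^ m * k + b ^ m) = Ico (k * b ^ m) ((k + 1) * b ^ m) := by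
      ring_nf
    simpa only [hblock, elemInterval_eq_gridCell] using hx.2 m k hm d₁ d₂ hd p.1 hp'.1 p.2 hp'.2

theorem cast_pow_le_sqrt_pow {b d n : ℕ} (hb : 0 < b) (h : 2 * d ≤ n) :
    ((b ^ d : ℕ) : ℝ) ≤ √(b : ℝ) ^ n := by
  calc ((b ^ d : ℕ) : ℝ) = √(b : ℝ) ^ (2 * d) := by
        rw [Nat.cast_pow, pow_mul, Real.sq_sqrt (Nat.cast_nonneg b)]
    _ ≤ √(b : ℝ) ^ n := pow_le_pow_right₀ (Real.one_le_sqrt.2 (Nat.one_le_cast.2 hb)) h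

theorem IsZeroTwoSeq.blockDisc_le {b : ℕ} {x : ℕ → ℝ²} (hx : IsZeroTwoSeq b x) (hb : 0 < b)
    {A : Set ℝ²} (hA : Convex ℝ A) (hAs : A ⊆ unitSq) {m o : ℕ} (ho : b ^ m ∣ o) :
    blockDisc x A o (b ^ m) ≤ 4 * (√(b : ℝ) + 1) * √(b : ℝ) ^ m := by
  have hd : (m + 1) / 2 + m / 2 = m := by omega
  have hdisc := (hx.isGridNet hd ho).abs_card_sub_mul_volume_le (pow_pos hb _) (pow_pos hb _)
    (fun n _ => hx.1 n) hA hAs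
  have hcard : ((b ^ ((m + 1) / 2) : ℕ) : ℝ) * (b ^ (m / 2) : ℕ) = (b ^ m : ℕ) := by
    rw [← Nat.cast_mul, ← pow_add, hd]
  have h₁ := cast_pow_le_sqrt_pow hb (show 2 * ((m + 1) / 2) ≤ m + 1 by omega)
  have h₂ := cast_pow_le_sqrt_pow hb (show 2 * (m / 2) ≤ m by omega)
  rw [hcard] at hdisc
  rw [pow_succ] at h₁
  rw [blockDisc]
  nlinarith [Real.sqrt_nonneg (b : ℝ)]

/-- `(β + 1) * B * (β ^ L - 1) = (β ^ 2 - 1) * B * ∑ j < L, β ^ j`: a block of length `< b ^ L`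
splits into at most `b - 1` aligned blocks of each length `b ^ j`, `j < L`. -/
theorem le_of_subadditive_of_pow_le {b : ℕ} (hb : 0 < b) {β B : ℝ} (hβ : 0 ≤ β)
    (hbβ : (b : ℝ) ≤ β ^ 2) (hB : 0 ≤ B) {D : ℕ → ℕ → ℝ} (hD0 : ∀ o, D o 0 = 0)
    (hadd : ∀ o c d, D o (c + d) ≤ D o c + D (o + c) d)
    (hpow : ∀ o m, b ^ m ∣ o → D o (b ^ m) ≤ B * β ^ m) (L : ℕ) {o n : ℕ} (ho : b ^ L ∣ o)
    (hn : n < b ^ L) : D o n ≤ (β + 1) * B * (β ^ L - 1) := by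
  induction L generalizing o n with
  | zero => simp [show n = 0 by simpa using hn, hD0]
  | succ L ih =>
    have peel : ∀ q o r, b ^ L ∣ o → r < b ^ L →
        D o (q * b ^ L + r) ≤ q * (B * β ^ L) + (β + 1) * B * (β ^ L - 1) := by
      intro q
      induction q with
      | zero => intro o r ho hr; simpa using ih ho hr
      | succ q ihq =>
        intro o r ho hr
        calc D o ((q + 1) * b ^ L + r) = D o (b ^ L + (q * b ^ L + r)) := by ring_nf
          _ ≤ B * β ^ L + (q * (B * β ^ L) + (β + 1) * B * (β ^ L - 1)) :=
            (hadd _ _ _).trans (add_le_add (hpow o L ho) (ihq _ _ (dvd_add ho dvd_rfl) hr))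
          _ = _ := by push_cast; ring
    have hq : ((n / b ^ L : ℕ) : ℝ) ≤ β ^ 2 - 1 := by
      have : n / b ^ L < b := Nat.div_lt_of_lt_mul (by rwa [pow_succ] at hn)
      have : ((n / b ^ L : ℕ) : ℝ) + 1 ≤ b := by exact_mod_cast this
      linarith
    have hpeel := peel (n / b ^ L) o (n % b ^ L) (dvd_trans (pow_dvd_pow b L.le_succ) ho)
      (Nat.mod_lt _ (pow_pos hb L))
    rw [Nat.div_add_mod'] at hpeel
    rw [pow_succ]
    nlinarith [mul_nonneg (mul_nonneg hB (pow_nonneg hβ L)) (sub_nonneg.2 hq)]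

theorem sqrt_pow_log_le_sqrt (b : ℕ) {N : ℕ} (hN : N ≠ 0) : √(b : ℝ) ^ Nat.log b N ≤ √(N : ℝ) := by
  rw [Real.le_sqrt (by positivity) (Nat.cast_nonneg _), ← pow_mul, mul_comm, pow_mul,
    Real.sq_sqrt (Nat.cast_nonneg _)]
  exact_mod_cast Nat.pow_log_le_self b hN

theorem four_mul_sqrt_add_one_sq_mul_sqrt_le {b : ℝ} (hb : 2 ≤ b) :
    4 * (√b + 1) ^ 2 * √b ≤ 4 * √2 * (b ^ 2 + b * √b) := by
  have hsq : √b ^ 2 = b := Real.sq_sqrt (by linarith)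
  have hs2 : √2 ≤ √b := Real.sqrt_le_sqrt hb
  have hr : √2 * √2 = 2 := Real.mul_self_sqrt (by norm_num)
  have hr0 : 0 ≤ √2 := Real.sqrt_nonneg 2
  generalize √b = s at hsq hs2 ⊢
  generalize √2 = r at hs2 hr hr0 ⊢
  subst hsq
  have hs : 0 ≤ s := hr0.trans hs2
  have hd := sub_nonneg.2 hs2
  have h₁ : 2 * s ^ 3 ≤ r * s ^ 4 := by
    nlinarith [mul_nonneg (mul_nonneg hr0 (pow_nonneg hs 3)) hd, congrArg (· * s ^ 3) hr]
  have h₂ : 2 * s ^ 2 ≤ r * s ^ 3 := by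
    nlinarith [mul_nonneg (mul_nonneg hr0 (pow_nonneg hs 2)) hd, congrArg (· * s ^ 2) hr]
  have h₃ : 2 * s ≤ r * s ^ 2 := by
    nlinarith [mul_nonneg (mul_nonneg hr0 hs) hd, congrArg (· * s) hr]
  nlinarith [mul_nonneg (pow_nonneg hs 2) hd]

theorem IsZeroTwoSeq.blockDisc_zero_le {b : ℕ} {x : ℕ → ℝ²} (hx : IsZeroTwoSeq b x) (hb : 2 ≤ b)
    {A : Set ℝ²} (hA : Convex ℝ A) (hAs : A ⊆ unitSq) {N : ℕ} (hN : N ≠ 0) :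
    blockDisc x A 0 N ≤ 4 * (√(b : ℝ) + 1) ^ 2 * √(b : ℝ) * √(N : ℝ) := by
  have hb0 : 0 < b := by omega
  set β := √(b : ℝ)
  have hβ : 0 ≤ β := Real.sqrt_nonneg _
  calc blockDisc x A 0 N ≤ (β + 1) * (4 * (β + 1)) * (β ^ (Nat.log b N + 1) - 1) :=
        le_of_subadditive_of_pow_le hb0 hβ (Real.sq_sqrt (Nat.cast_nonneg _)).ge (by positivity)
          (blockDisc_zero x A) (blockDisc_add_le x A) (fun _ _ ho => hx.blockDisc_le hb0 hA hAs ho)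
          _ (dvd_zero _) (Nat.lt_pow_succ_log_self hb N)
    _ ≤ 4 * (β + 1) ^ 2 * β * β ^ Nat.log b N := by rw [pow_succ']; nlinarith
    _ ≤ 4 * (β + 1) ^ 2 * β * √(N : ℝ) := by gcongr; exact sqrt_pow_log_le_sqrt b hN

/-- Isotropic discrepancy bound for the first `N` points of a `(0,2)`-sequence in base `b`. -/
theorem seq_isoDisc (b : ℕ) (hb : 2 ≤ b) (x : ℕ → EuclideanSpace ℝ (Fin 2))
    (hx : IsZeroTwoSeq b x) (N : ℕ) (hN : 0 < N) :
    isoDisc N (fun n : Fin N => x n) ≤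
      4 * Real.sqrt 2 * ((b : ℝ) ^ 2 + (b : ℝ) * Real.sqrt b) / Real.sqrt N := by
  have hN' : (0 : ℝ) < N := Nat.cast_pos.2 hN
  have : Nonempty {A : Set ℝ² // Convex ℝ A ∧ A ⊆ unitSq} := ⟨⟨∅, convex_empty, Set.empty_subset _⟩⟩
  refine ciSup_le fun ⟨A, hA, hAs⟩ => ?_
  rw [locDisc_eq_blockDisc_div x A hN, div_le_div_iff₀ hN' (Real.sqrt_pos.2 hN')]
  calc blockDisc x A 0 N * √(N : ℝ)
      ≤ 4 * (√(b : ℝ) + 1) ^ 2 * √(b : ℝ) * (√(N : ℝ) * √(N : ℝ)) := by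
        nlinarith [hx.blockDisc_zero_le hb hA hAs hN.ne', Real.sqrt_nonneg (N : ℝ)]
    _ ≤ 4 * √2 * ((b : ℝ) ^ 2 + b * √(b : ℝ)) * N := by
        rw [Real.mul_self_sqrt hN'.le]
        exact mul_le_mul_of_nonneg_right
          (four_mul_sqrt_add_one_sq_mul_sqrt_le (by exact_mod_cast hb)) hN'.le
end

section
/- Let Fₘ denote the Fibonacci numbers (F₁ = F₂ = 1, Fₘ = Fₘ₋₁ + Fₘ₋₂). For odd index 2m+1, the Fibonacci lattice F_{2m+1} = {(n/F_{2m+1}, {n F_{2m}/F_{2m+1}}) : 0 ≤ n < F_{2m+1}} has minimum pairwise distance exactly 1/√F_{2m+1}. -/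
/-!
Two points `n ≠ n'` of the lattice differ by `(k, y) / F` with `k = n - n' ≠ 0` and
`y ≡ k P [ZMOD F]`, where `F = F_{2m+1}` and `P = F_{2m}`. Cassini's identity gives
`P² ≡ -1 [ZMOD F]`, so `F ∣ k² + y²` and hence `k² + y² ≥ F`. Equality is attained: the addition
formula gives `F_{m+1} P ≡ ±F_m [ZMOD F]`, so `P` maps one of `F_m, F_{m+1}` to the other modulo
`F`, and `F_m² + F_{m+1}² = F`.
-/

/-- The `n`-th point of the Fibonacci lattice with `F_N` points
(`F = F_N`, `Fprev = F_{N-1}`). -/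
noncomputable def fibLatticePoint (F Fprev n : ℕ) : EuclideanSpace ℝ (Fin 2) :=
  WithLp.toLp 2 ![(n : ℝ) / F, Int.fract ((n * Fprev : ℕ) / (F : ℝ))]

theorem Int.fib_two_mul_sq_modEq (n : ℤ) : fib (2 * n) ^ 2 ≡ -1 [ZMOD fib (2 * n + 1)] := by
  have cassini := fib_succ_mul_fib_pred_sub_fib_sq (2 * n + 1)
  rw [add_sub_cancel_right, Odd.neg_one_pow (by simp), add_assoc, one_add_one_eq_two,
    fib_add_two] at cassini
  exact (Int.modEq_iff_dvd.2 ⟨fib (2 * n + 1) - fib (2 * n), by linear_combination cassini⟩).symm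

theorem Int.fib_succ_mul_fib_two_mul_modEq (m : ℕ) :
    fib (m + 1) * fib (2 * m) ≡ (-1) ^ m * fib m [ZMOD fib (2 * m + 1)] := by
  -- `fib` at negative indices turns the addition formula into a congruence modulo `fib (2m+1)`
  have h := fib_add (2 * m + 1) (-(m + 1 : ℕ))
  rw [show (2 * m + 1 : ℤ) + -(m + 1 : ℕ) = m by push_cast; ring, add_sub_cancel_right,
    show -((m + 1 : ℕ) : ℤ) + 1 = -(m : ℕ) by push_cast; ring,
    fib_neg_natCast, fib_neg_natCast, ← fib_natCast, ← fib_natCast, Nat.cast_add_one] at h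
  have hsq : ((-1 : ℤ) ^ m) ^ 2 = 1 := by rw [← pow_mul]; exact Even.neg_one_pow ⟨m, by ring⟩
  refine Int.modEq_iff_dvd.2 ⟨-fib m, ?_⟩
  linear_combination (-1) ^ m * h + (fib (2 * m) * fib (m + 1) - fib (2 * m + 1) * fib m) * hsq

theorem Int.mul_modEq_of_sq_modEq_neg_one {F P a b : ℤ} (hP : P ^ 2 ≡ -1 [ZMOD F])
    (h : a * P ≡ -b [ZMOD F]) : b * P ≡ a [ZMOD F] :=
  calc b * P = -(-b) * P := by ring
    _ ≡ -(a * P) * P [ZMOD F] := by gcongr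
    _ = -(a * P ^ 2) := by ring
    _ ≡ -(a * -1) [ZMOD F] := by gcongr
    _ = a := by ring

theorem Int.le_sq_add_sq_of_sq_modEq_neg_one {F P k y : ℤ} (hP : P ^ 2 ≡ -1 [ZMOD F])
    (hy : y ≡ k * P [ZMOD F]) (hk : k ≠ 0) : F ≤ k ^ 2 + y ^ 2 := by
  have hdvd : F ∣ k ^ 2 + y ^ 2 := Int.modEq_zero_iff_dvd.1 <|
    calc k ^ 2 + y ^ 2 ≡ k ^ 2 + (k * P) ^ 2 [ZMOD F] := by gcongr
      _ = k ^ 2 * (1 + P ^ 2) := by ring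
      _ ≡ k ^ 2 * (1 + -1) [ZMOD F] := by gcongr
      _ = 0 := by ring
  exact Int.le_of_dvd (by positivity) hdvd

section FibLattice

variable {F P : ℕ}

theorem dist_fibLatticePoint (hF : 0 < F) (n n' : ℕ) :
    dist (fibLatticePoint F P n) (fibLatticePoint F P n') =
      √(((n : ℝ) - n') ^ 2 + (((n * P % F : ℕ) : ℝ) - (n' * P % F : ℕ)) ^ 2) / F := by
  rw [EuclideanSpace.dist_eq, Fin.sum_univ_two]
  simp only [fibLatticePoint, PiLp.toLp_apply, Matrix.cons_val_zero, Matrix.cons_val_one,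
    Real.dist_eq, sq_abs, Int.fract_div_natCast_eq_div_natCast_mod]
  rw [← Real.sqrt_sq (by positivity : (0 : ℝ) ≤ F), ← Real.sqrt_div' _ (by positivity),
    Real.sqrt_sq (by positivity)]
  congr 1
  field_simp

theorem dist_fibLatticePoint_zero {a b : ℕ} (hF : 0 < F) (hab : a ^ 2 + b ^ 2 = F)
    (hr : a * P % F = b) : dist (fibLatticePoint F P a) (fibLatticePoint F P 0) = 1 / √F := by
  rw [dist_fibLatticePoint hF, zero_mul, Nat.zero_mod, hr, ← Real.sqrt_div_self']
  congr
  simp [← hab]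

theorem one_div_sqrt_le_dist_fibLatticePoint (hP : (P : ℤ) ^ 2 ≡ -1 [ZMOD F]) {n n' : ℕ}
    (hne : n ≠ n') : 1 / √F ≤ dist (fibLatticePoint F P n) (fibLatticePoint F P n') := by
  have hF : 0 < F := by
    refine Nat.pos_of_ne_zero fun hF ↦ ?_
    rw [hF, Nat.cast_zero, Int.modEq_zero_iff] at hP
    nlinarith
  have key : (F : ℤ) ≤ ((n : ℤ) - n') ^ 2 + (((n * P % F : ℕ) : ℤ) - (n' * P % F : ℕ)) ^ 2 := by
    refine Int.le_sq_add_sq_of_sq_modEq_neg_one hP ?_ (by omega)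
    push_cast
    rw [sub_mul]
    exact (Int.mod_modEq _ _).sub (Int.mod_modEq _ _)
  rw [dist_fibLatticePoint hF, ← Real.sqrt_div_self']
  gcongr
  exact_mod_cast key

theorem isLeast_dist_fibLatticePoint {a b : ℕ} (hP : (P : ℤ) ^ 2 ≡ -1 [ZMOD F]) (ha : 0 < a)
    (hb : 0 < b) (hab : a ^ 2 + b ^ 2 = F) (hr : (a * P : ℤ) ≡ b [ZMOD F]) :
    IsLeast {d : ℝ | ∃ n n' : Fin F, n ≠ n' ∧
        d = dist (fibLatticePoint F P n) (fibLatticePoint F P n')} (1 / √F) := by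
  have ha_lt : a < F := by nlinarith
  have hb_lt : b < F := by nlinarith
  have hr' : a * P % F = b := by
    rw [← Nat.mod_eq_of_lt hb_lt]
    exact_mod_cast hr
  refine ⟨⟨⟨a, ha_lt⟩, ⟨0, by omega⟩, Fin.ne_of_val_ne ha.ne',
    (dist_fibLatticePoint_zero (by omega) hab hr').symm⟩, ?_⟩
  rintro d ⟨n, n', hne, rfl⟩
  exact one_div_sqrt_le_dist_fibLatticePoint hP (Fin.val_ne_of_ne hne)

end FibLattice

attribute [local norm_cast] Int.fib_natCast

/-- The Fibonacci lattice with `F_{2m+1}` points has minimum pairwise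
distance exactly `1/√F_{2m+1}`. -/
theorem fibLattice_minDist (m : ℕ) (hm : 1 ≤ m) :
    IsLeast
      {d : ℝ | ∃ n n' : Fin (Nat.fib (2 * m + 1)), n ≠ n' ∧
        d = dist (fibLatticePoint (Nat.fib (2 * m + 1)) (Nat.fib (2 * m)) n)
                 (fibLatticePoint (Nat.fib (2 * m + 1)) (Nat.fib (2 * m)) n')}
      (1 / Real.sqrt (Nat.fib (2 * m + 1))) := by
  have hP : (Nat.fib (2 * m) : ℤ) ^ 2 ≡ -1 [ZMOD Nat.fib (2 * m + 1)] := by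
    exact_mod_cast Int.fib_two_mul_sq_modEq m
  have hr : (Nat.fib (m + 1) * Nat.fib (2 * m) : ℤ) ≡ (-1) ^ m * Nat.fib m
      [ZMOD Nat.fib (2 * m + 1)] := by
    exact_mod_cast Int.fib_succ_mul_fib_two_mul_modEq m
  have hpos : 0 < Nat.fib m := Nat.fib_pos.2 hm
  have hpos' : 0 < Nat.fib (m + 1) := Nat.fib_pos.2 (by omega)
  have hsum := Nat.fib_two_mul_add_one m
  rcases Nat.even_or_odd m with heven | hodd
  · rw [heven.neg_one_pow, one_mul] at hr
    exact isLeast_dist_fibLatticePoint hP hpos' hpos hsum.symm hr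
  · rw [hodd.neg_one_pow, neg_one_mul] at hr
    exact isLeast_dist_fibLatticePoint hP hpos hpos' (by rw [hsum, add_comm])
      (Int.mul_modEq_of_sq_modEq_neg_one hP hr)
end

section
/- Stolarsky's invariance principle on S²: for any points z₁,…,z_N ∈ S², (1/N²)∑_{j,k}‖z_j − z_k‖ + 4·D_{L₂}(Z_N)² = ∫∫ ‖z − w‖ dσ(z)dσ(w) = 4/3, where D_{L₂} is the spherical cap L₂-discrepancy. -/
open MeasureTheory Metric
open scoped Classical RealInnerProductSpace

noncomputable def sigmaSphere : Measure (sphere (0 : EuclideanSpace ℝ (Fin 3)) 1) :=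
  ((volume : Measure (EuclideanSpace ℝ (Fin 3))).toSphere Set.univ)⁻¹ •
    (volume : Measure (EuclideanSpace ℝ (Fin 3))).toSphere

/-!
Everything rests on Archimedes' theorem `σ(C(x,t)) = (1 - t)/2`. For `0 < t < 1` the cap is the
radial projection of a solid cone in the unit ball, whose volume is computed by slicing it into
discs; monotonicity in `t` and complements give the other values. By the layer-cake formula
`∫ (f - a) dσ = ∫_a^b σ{f > t} dt`, all integrals over the sphere needed then reduce to cap
measures: `∫ ‖z - w‖ dσ(w) = 4/3`, and, since `C(x,t) ∩ C(y,t)` is the superlevel set of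
`min ⟪x,·⟫ ⟪y,·⟫ = (⟪x,·⟫ + ⟪y,·⟫ - |⟪x - y,·⟫|)/2`, also
`∫_{-1}^1 σ(C(x,t) ∩ C(y,t)) dt = 1 - ‖x - y‖/4`. Expanding the square in the discrepancy and
integrating in `t` turns it into `1 - (1/4N²) ∑ ‖z_j - z_k‖ - 2/3`.
-/

open Set Real Filter Topology
open scoped ENNReal Pointwise

theorem ContinuousAt.eq_of_eventually_le_of_eventually_ge {g : ℝ → ℝ} {a c : ℝ}
    (hg : ContinuousAt g a) (hl : ∀ᶠ t in 𝓝[<] a, c ≤ g t) (hr : ∀ᶠ t in 𝓝[>] a, g t ≤ c) :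
    c = g a :=
  le_antisymm (ge_of_tendsto (hg.tendsto.mono_left nhdsWithin_le_nhds) hl)
    (le_of_tendsto (hg.tendsto.mono_left nhdsWithin_le_nhds) hr)

theorem Antitone.eq_of_eqOn_compl_finite {F g : ℝ → ℝ} (hF : Antitone F) (hg : Continuous g)
    {S : Set ℝ} (hS : S.Finite) (h : EqOn F g Sᶜ) : F = g := by
  funext a
  have hSc : Sᶜ ∈ 𝓝[≠] a := by
    simpa [compl_eq_univ_sdiff] using nhdsNE_of_nhdsNE_sdiff_finite (univ_mem (f := 𝓝[≠] a)) hS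
  refine hg.continuousAt.eq_of_eventually_le_of_eventually_ge ?_ ?_
  · filter_upwards [self_mem_nhdsWithin, nhdsLT_le_nhdsNE a hSc] with t (ht : t < a) htS
    exact (hF ht.le).trans_eq (h htS)
  · filter_upwards [self_mem_nhdsWithin, nhdsGT_le_nhdsNE a hSc] with t (ht : a < t) htS
    exact (h htS).symm.trans_le (hF ht.le)

theorem integral_sub_eq_intervalIntegral_measureReal_lt {α : Type*} [MeasurableSpace α]
    {μ : Measure α} [IsFiniteMeasure μ] {f : α → ℝ} {a b : ℝ} (hab : a ≤ b)
    (hf : Integrable f μ) (ha : ∀ x, a ≤ f x) (hb : ∀ x, f x ≤ b) :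
    ∫ x, (f x - a) ∂μ = ∫ t in a..b, μ.real {x | t < f x} := by
  have hvanish : ∀ t ∈ Ioi 0 \ Ioc 0 (b - a), μ.real {x | t < f x - a} = 0 := by
    rintro t ⟨ht₀, ht⟩
    have : {x | t < f x - a} = ∅ :=
      eq_empty_of_forall_notMem fun x hx => by
        simp only [mem_Ioc, mem_Ioi.1 ht₀, true_and, not_le] at ht
        linarith [hb x, show t < f x - a from hx]
    rw [this, measureReal_empty]
  rw [Integrable.integral_eq_integral_meas_lt (f := fun x => f x - a) (hf.sub (integrable_const a))
      (ae_of_all _ fun x => sub_nonneg.2 (ha x)),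
    setIntegral_eq_of_subset_of_forall_sdiff_eq_zero measurableSet_Ioi Ioc_subset_Ioi_self hvanish,
    ← intervalIntegral.integral_of_le (sub_nonneg.2 hab), ← sub_self a,
    ← intervalIntegral.integral_comp_sub_right]
  simp_rw [sub_lt_sub_iff_right]

theorem integral_sq_average_sub {α ι : Type*} [MeasurableSpace α] {μ : Measure α}
    [IsProbabilityMeasure μ] [Fintype ι] [Nonempty ι] {φ : ι → α → ℝ} {c : ℝ}
    (hφ : ∀ i, Integrable (φ i) μ) (hφφ : ∀ i j, Integrable (fun x => φ i x * φ j x) μ)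
    (hc : ∀ i, ∫ x, φ i x ∂μ = c) :
    ∫ x, ((∑ i, φ i x) / Fintype.card ι - c) ^ 2 ∂μ =
      (∑ i, ∑ j, ∫ x, φ i x * φ j x ∂μ) / Fintype.card ι ^ 2 - c ^ 2 := by
  have hcard : (Fintype.card ι : ℝ) ≠ 0 := Nat.cast_ne_zero.2 Fintype.card_ne_zero
  have hexpand (x : α) : ((∑ i, φ i x) / Fintype.card ι - c) ^ 2 =
      (∑ i, ∑ j, φ i x * φ j x) / Fintype.card ι ^ 2 -
        2 * c / Fintype.card ι * ∑ i, φ i x + c ^ 2 := by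
    rw [sub_sq, div_pow, sq (∑ i, φ i x), Finset.sum_mul_sum]
    ring
  have hint₂ : Integrable (fun x => ∑ i, ∑ j, φ i x * φ j x) μ :=
    integrable_finsetSum _ fun i _ => integrable_finsetSum _ fun j _ => hφφ i j
  have hint₁ : Integrable (fun x => ∑ i, φ i x) μ := integrable_finsetSum _ fun i _ => hφ i
  have hint₃ : Integrable (fun x => (∑ i, ∑ j, φ i x * φ j x) / Fintype.card ι ^ 2 -
      2 * c / Fintype.card ι * ∑ i, φ i x) μ := (hint₂.div_const _).sub (hint₁.const_mul _)
  simp_rw [hexpand]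
  rw [integral_add hint₃ (integrable_const _),
    integral_sub (hint₂.div_const _) (hint₁.const_mul _), integral_div, integral_const_mul,
    integral_finsetSum _ fun i _ => integrable_finsetSum _ fun j _ => hφφ i j,
    integral_finsetSum _ fun i _ => hφ i]
  simp_rw [integral_finsetSum _ fun j _ => hφφ _ j, hc]
  simp only [Finset.sum_const, Finset.card_univ, nsmul_eq_mul, integral_const, probReal_univ,
    smul_eq_mul, one_mul]
  field_simp
  ring

theorem EuclideanSpace.volume_setOf_apply_zero_norm (n : ℕ) (P : ℝ → ℝ → Prop) :
    volume {v : EuclideanSpace ℝ (Fin (n + 1)) | P (v 0) ‖v‖} =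
      (volume : Measure ℝ).prod (volume : Measure (EuclideanSpace ℝ (Fin n)))
        {p | P p.1 √(p.1 ^ 2 + ‖p.2‖ ^ 2)} := by
  let e : EuclideanSpace ℝ (Fin (n + 1)) ≃ᵐ ℝ × EuclideanSpace ℝ (Fin n) :=
    (MeasurableEquiv.toLp 2 _).symm.trans <|
      (MeasurableEquiv.piFinSuccAbove (fun _ => ℝ) 0).trans <|
        MeasurableEquiv.prodCongr (MeasurableEquiv.refl ℝ) (MeasurableEquiv.toLp 2 _)
  have he : MeasurePreserving e volume (volume.prod volume) :=
    ((MeasurePreserving.id volume).prod (PiLp.volume_preserving_toLp (Fin n))).comp <|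
      (volume_preserving_piFinSuccAbove (fun _ => ℝ) 0).comp
        (EuclideanSpace.volume_preserving_symm_measurableEquiv_toLp _)
  have he_apply (v) : e v = (v 0, WithLp.toLp 2 fun j => v j.succ) := rfl
  rw [← he.measure_preimage_equiv]
  congr 1
  ext v
  rw [mem_preimage, he_apply, mem_ofPred_eq, mem_ofPred_eq, ← Real.sqrt_sq (norm_nonneg v),
    EuclideanSpace.norm_sq_eq, EuclideanSpace.norm_sq_eq, Fin.sum_univ_succ]
  simp

theorem EuclideanSpace.volume_ball_sqrt_fin_two (m : ℝ) :
    volume (ball (0 : EuclideanSpace ℝ (Fin 2)) √m) = .ofReal (π * m) := by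
  rw [EuclideanSpace.volume_ball_fin_two, ← ENNReal.ofReal_pow (sqrt_nonneg m),
    ← ENNReal.ofReal_mul (by positivity), mul_comm]
  rcases le_total 0 m with hm | hm
  · rw [sq_sqrt hm]
  · rw [sqrt_eq_zero'.2 hm, ENNReal.ofReal_of_nonpos (by nlinarith [pi_pos]),
      ENNReal.ofReal_of_nonpos (by nlinarith [pi_pos])]

/-- The squared radius of the slice at height `z ∈ (0, 1]` of the solid cone
`{v | ‖v‖ < 1 ∧ t * ‖v‖ < v 0}`: the cone `t² ‖v‖² < z²` bounds it below `z = t`, the ball above. -/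
noncomputable def coneSliceRadiusSq (t z : ℝ) : ℝ := min (1 - z ^ 2) ((t⁻¹ ^ 2 - 1) * z ^ 2)

theorem setOf_cone_slice_eq {t : ℝ} (ht₀ : 0 < t) (z : ℝ) :
    {u : EuclideanSpace ℝ (Fin 2) | √(z ^ 2 + ‖u‖ ^ 2) < 1 ∧ t * √(z ^ 2 + ‖u‖ ^ 2) < z} =
      if 0 < z then ball 0 √(coneSliceRadiusSq t z) else ∅ := by
  ext u
  split_ifs with hz
  · have hsq : (z / t) ^ 2 = t⁻¹ ^ 2 * z ^ 2 := by ring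
    rw [mem_ball_zero_iff, lt_sqrt (norm_nonneg u), coneSliceRadiusSq, lt_min_iff,
      mem_ofPred_eq, mul_comm, ← lt_div_iff₀ ht₀, sqrt_lt' one_pos, sqrt_lt' (div_pos hz ht₀), hsq]
    constructor <;> rintro ⟨h₁, h₂⟩ <;> constructor <;> linarith
  · simp only [mem_ofPred_eq, mem_empty_iff_false, iff_false, not_and, not_lt]
    intro _
    exact (not_lt.1 hz).trans (by positivity)

theorem intervalIntegral_coneSliceRadiusSq {t : ℝ} (ht₀ : 0 < t) (ht₁ : t < 1) :
    ∫ z in (0 : ℝ)..1, coneSliceRadiusSq t z = 2 * (1 - t) / 3 := by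
  have hcont : Continuous (coneSliceRadiusSq t) := by
    unfold coneSliceRadiusSq
    fun_prop
  have hscale (z : ℝ) : t⁻¹ ^ 2 * z ^ 2 = z ^ 2 / t ^ 2 := by ring
  have hcone : ∫ z in (0 : ℝ)..t, coneSliceRadiusSq t z =
      ∫ z in (0 : ℝ)..t, (t⁻¹ ^ 2 - 1) * z ^ 2 := by
    refine intervalIntegral.integral_congr fun z hz => ?_
    rw [uIcc_of_le ht₀.le] at hz
    have : t⁻¹ ^ 2 * z ^ 2 ≤ 1 := by
      rw [hscale, div_le_one (by positivity)]
      nlinarith [hz.1, hz.2]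
    exact min_eq_right (by linarith)
  have hball : ∫ z in t..1, coneSliceRadiusSq t z = ∫ z in t..1, 1 - z ^ 2 := by
    refine intervalIntegral.integral_congr fun z hz => ?_
    rw [uIcc_of_le ht₁.le] at hz
    have : 1 ≤ t⁻¹ ^ 2 * z ^ 2 := by
      rw [hscale, one_le_div (by positivity)]
      nlinarith [hz.1, hz.2]
    exact min_eq_left (by linarith)
  rw [← intervalIntegral.integral_add_adjacent_intervals (b := t) (hcont.intervalIntegrable _ _)
    (hcont.intervalIntegrable _ _), hcone, hball]
  simp only [intervalIntegral.integral_const_mul, integral_pow, intervalIntegral.integral_sub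
    intervalIntegrable_const (intervalIntegral.intervalIntegrable_pow 2),
    intervalIntegral.integral_const, smul_eq_mul]
  field_simp
  ring

theorem lintegral_ite_coneSliceRadiusSq {t : ℝ} (ht₀ : 0 < t) (ht₁ : t < 1) :
    ∫⁻ z, (if 0 < z then ENNReal.ofReal (π * coneSliceRadiusSq t z) else 0) =
      .ofReal (2 * π * (1 - t) / 3) := by
  have hsupp : (fun z : ℝ => if 0 < z then ENNReal.ofReal (π * coneSliceRadiusSq t z) else 0) =
      (Ioc 0 1).indicator fun z => .ofReal (π * coneSliceRadiusSq t z) := by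
    ext z
    by_cases hz : z ∈ Ioc 0 1
    · rw [indicator_of_mem hz, if_pos hz.1]
    · rw [indicator_of_notMem hz]
      split_ifs with hz₀
      · refine ENNReal.ofReal_of_nonpos (mul_nonpos_of_nonneg_of_nonpos pi_pos.le ?_)
        have : 1 < z := by simpa [hz₀] using hz
        exact (min_le_left _ _).trans (by nlinarith)
      · rfl
  have hnonneg : ∀ z ∈ Ioc (0 : ℝ) 1, 0 ≤ π * coneSliceRadiusSq t z := by
    intro z hz
    have : 1 ≤ t⁻¹ ^ 2 := one_le_pow₀ ((one_le_inv₀ ht₀).2 ht₁.le)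
    exact mul_nonneg pi_pos.le (le_min (by nlinarith [hz.1, hz.2]) (by nlinarith))
  have hint : IntegrableOn (fun z => π * coneSliceRadiusSq t z) (Ioc 0 1) := by
    refine Continuous.integrableOn_Ioc ?_
    unfold coneSliceRadiusSq
    fun_prop
  rw [hsupp, lintegral_indicator measurableSet_Ioc, ← ofReal_integral_eq_lintegral_ofReal hint
      ((ae_restrict_iff' measurableSet_Ioc).2 (.of_forall hnonneg)),
    ← intervalIntegral.integral_of_le zero_le_one, intervalIntegral.integral_const_mul,
    intervalIntegral_coneSliceRadiusSq ht₀ ht₁]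
  ring_nf

theorem volume_cone_fin_three {t : ℝ} (ht₀ : 0 < t) (ht₁ : t < 1) :
    volume {v : EuclideanSpace ℝ (Fin 3) | ‖v‖ < 1 ∧ t * ‖v‖ < v 0} =
      .ofReal (2 * π * (1 - t) / 3) := by
  refine (EuclideanSpace.volume_setOf_apply_zero_norm 2 fun z r => r < 1 ∧ t * r < z).trans ?_
  have hmeas : MeasurableSet {p : ℝ × EuclideanSpace ℝ (Fin 2) |
      √(p.1 ^ 2 + ‖p.2‖ ^ 2) < 1 ∧ t * √(p.1 ^ 2 + ‖p.2‖ ^ 2) < p.1} := by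
    have : Measurable fun p : ℝ × EuclideanSpace ℝ (Fin 2) => √(p.1 ^ 2 + ‖p.2‖ ^ 2) := by
      fun_prop
    exact (measurableSet_lt this measurable_const).inter
      (measurableSet_lt (this.const_mul t) measurable_fst)
  rw [Measure.prod_apply hmeas]
  simp only [preimage_ofPred_eq, setOf_cone_slice_eq ht₀, apply_ite, measure_empty,
    EuclideanSpace.volume_ball_sqrt_fin_two]
  exact lintegral_ite_coneSliceRadiusSq ht₀ ht₁

section SphereCap

variable {E : Type*} [NormedAddCommGroup E] [InnerProductSpace ℝ E]

def sphereCap (x : E) (t : ℝ) : Set (sphere (0 : E) 1) := {w | t < ⟪x, w⟫}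

theorem antitone_sphereCap (x : E) : Antitone (sphereCap x) :=
  fun _ _ hst _ hw => lt_of_le_of_lt hst hw

theorem measurableSet_sphereCap [MeasurableSpace E] [OpensMeasurableSpace E] (x : E) (t : ℝ) :
    MeasurableSet (sphereCap x t) :=
  measurableSet_lt measurable_const (continuous_const.inner continuous_subtype_val).measurable

theorem inner_mem_Icc_of_mem_sphere {x : E} (hx : ‖x‖ = 1) (w : sphere (0 : E) 1) :
    ⟪x, (w : E)⟫ ∈ Icc (-1) 1 := by
  have := abs_real_inner_le_norm x w
  rw [hx, norm_eq_of_mem_sphere w, one_mul] at this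
  exact abs_le.1 this

theorem Ioo_smul_image_sphereCap (x : E) (t : ℝ) :
    Ioo (0 : ℝ) 1 • (Subtype.val '' sphereCap x t) = {y : E | ‖y‖ < 1 ∧ t * ‖y‖ < ⟪x, y⟫} := by
  ext y
  constructor
  · rintro ⟨r, ⟨hr₀, hr₁⟩, -, ⟨w, hw, rfl⟩, rfl⟩
    have hnorm : ‖r • (w : E)‖ = r := by simp [norm_smul, abs_of_pos hr₀]
    change ‖r • (w : E)‖ < 1 ∧ t * ‖r • (w : E)‖ < ⟪x, r • (w : E)⟫
    rw [hnorm, real_inner_smul_right, mul_comm t r]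
    exact ⟨hr₁, mul_lt_mul_of_pos_left hw hr₀⟩
  · rintro ⟨hy₁, hyt⟩
    have hy₀ : 0 < ‖y‖ := norm_pos_iff.2 (by rintro rfl; simp at hyt)
    refine ⟨‖y‖, ⟨hy₀, hy₁⟩, ‖y‖⁻¹ • y, ⟨⟨‖y‖⁻¹ • y, ?_⟩, ?_, rfl⟩, smul_inv_smul₀ hy₀.ne' y⟩
    · simp [norm_smul, hy₀.ne']
    · change t < ⟪x, ‖y‖⁻¹ • y⟫
      rwa [real_inner_smul_right, lt_inv_mul_iff₀ hy₀, mul_comm]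

theorem volume_setOf_inner_norm [FiniteDimensional ℝ E] [MeasurableSpace E] [BorelSpace E]
    {ι : Type*} [Fintype ι] (hι : Module.finrank ℝ E = Fintype.card ι) {x : E} (hx : ‖x‖ = 1)
    (i : ι) (P : ℝ → ℝ → Prop) :
    volume {y : E | P ⟪x, y⟫ ‖y‖} = volume {v : EuclideanSpace ℝ ι | P (v i) ‖v‖} := by
  have hon : Orthonormal ℝ (({i} : Set ι).domRestrict fun _ => x) :=
    ⟨fun _ => hx, fun j k hjk => (hjk (Subsingleton.elim j k)).elim⟩
  obtain ⟨b, hb⟩ := hon.exists_orthonormalBasis_extension_of_card_eq hι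
  have hbi : b i = x := hb i rfl
  let e := b.repr.toHomeomorph.toMeasurableEquiv
  rw [← (b.measurePreserving_repr (F := E)).measure_preimage_equiv (f := e)]
  congr 1
  ext y
  simp [e, b.repr_apply_apply, hbi]

end SphereCap

local notation "E³" => EuclideanSpace ℝ (Fin 3)
local notation "S²" => sphere (0 : E³) 1

instance : IsProbabilityMeasure sigmaSphere :=
  ⟨by rw [sigmaSphere, Measure.smul_apply, smul_eq_mul, ENNReal.inv_mul_cancel
    (Measure.measure_univ_ne_zero.2 (Measure.toSphere_ne_zero _)) (measure_ne_top _ _)]⟩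

theorem sigmaSphere_apply {s : Set S²} (hs : MeasurableSet s) :
    sigmaSphere s = volume (Ioo (0 : ℝ) 1 • (Subtype.val '' s)) / volume (ball (0 : E³) 1) := by
  rw [sigmaSphere, Measure.smul_apply, Measure.toSphere_apply' _ hs, Measure.toSphere_apply_univ,
    smul_eq_mul, mul_comm, ← div_eq_mul_inv, ENNReal.mul_div_mul_left _ _ (by simp) (by simp)]

theorem Continuous.integrable_sigmaSphere {f : S² → ℝ} (hf : Continuous f) :
    Integrable f sigmaSphere :=
  hf.integrable_of_hasCompactSupport (HasCompactSupport.of_compactSpace f)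

theorem sigmaSphere_real_sphereCap_of_mem_Ioo {x : E³} (hx : ‖x‖ = 1) {t : ℝ}
    (ht : t ∈ Ioo 0 1) : sigmaSphere.real (sphereCap x t) = (1 - t) / 2 := by
  have hcone := volume_setOf_inner_norm (ι := Fin 3) (by simp) hx 0 fun s r => r < 1 ∧ t * r < s
  rw [measureReal_def, sigmaSphere_apply (measurableSet_sphereCap x t), Ioo_smul_image_sphereCap,
    hcone, volume_cone_fin_three ht.1 ht.2, EuclideanSpace.volume_ball_fin_three,
    ENNReal.toReal_div, ENNReal.toReal_ofReal (by nlinarith [pi_pos, ht.2])]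
  simp only [ENNReal.ofReal_one, one_pow, one_mul]
  rw [ENNReal.toReal_ofReal (by positivity)]
  field_simp
  ring

theorem sigmaSphere_real_setOf_le_inner {x : E³} (hx : ‖x‖ = 1) {s : ℝ} (hs : s ∈ Ioo 0 1) :
    sigmaSphere.real {w : S² | s ≤ ⟪x, w⟫} = (1 - s) / 2 := by
  refine ContinuousAt.eq_of_eventually_le_of_eventually_ge (g := fun t => (1 - t) / 2)
    (by fun_prop) ?_ ?_
  · filter_upwards [Ioo_mem_nhdsLT hs.1] with t ht
    rw [← sigmaSphere_real_sphereCap_of_mem_Ioo hx ⟨ht.1, ht.2.trans hs.2⟩]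
    exact measureReal_mono fun w (hw : s ≤ _) => ht.2.trans_le hw
  · filter_upwards [Ioo_mem_nhdsGT hs.2] with t ht
    rw [← sigmaSphere_real_sphereCap_of_mem_Ioo hx ⟨hs.1.trans ht.1, ht.2⟩]
    exact measureReal_mono fun w (hw : t < _) => (ht.1.trans hw).le

theorem sigmaSphere_real_sphereCap_of_mem_Ioo_neg {x : E³} (hx : ‖x‖ = 1) {t : ℝ}
    (ht : t ∈ Ioo (-1) 0) : sigmaSphere.real (sphereCap x t) = (1 - t) / 2 := by
  have hcompl : sphereCap x t = {w : S² | -t ≤ ⟪-x, w⟫}ᶜ := by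
    ext w
    simp [sphereCap, inner_neg_left]
  rw [hcompl, probReal_compl_eq_one_sub (measurableSet_le measurable_const
      (continuous_const.inner continuous_subtype_val).measurable),
    sigmaSphere_real_setOf_le_inner (by rwa [norm_neg]) ⟨neg_pos.2 ht.2, by linarith [ht.1]⟩]
  ring

theorem sigmaSphere_real_sphereCap {x : E³} (hx : ‖x‖ = 1) (t : ℝ) :
    sigmaSphere.real (sphereCap x t) = max 0 (min 1 ((1 - t) / 2)) := by
  refine congrFun (Antitone.eq_of_eqOn_compl_finite
    (F := fun t => sigmaSphere.real (sphereCap x t)) (g := fun t => max 0 (min 1 ((1 - t) / 2)))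
    (fun s t hst => measureReal_mono (antitone_sphereCap x hst)) (by fun_prop)
    (toFinite {-1, 0, 1}) fun t ht => ?_) t
  simp only [mem_compl_iff, mem_insert_iff, mem_singleton_iff, not_or] at ht
  obtain ⟨ht₁, ht₀, ht₁'⟩ := ht
  dsimp only
  have hclamp : t ∈ Icc (-1) 1 → max 0 (min 1 ((1 - t) / 2)) = (1 - t) / 2 := fun h => by
    rw [min_eq_right (by linarith [h.1]), max_eq_right (by linarith [h.2])]
  rcases lt_or_gt_of_ne ht₁ with ht | hlt
  · have : sphereCap x t = univ :=
      eq_univ_of_forall fun w => ht.trans_le (inner_mem_Icc_of_mem_sphere hx w).1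
    simp only [this, probReal_univ]
    rw [min_eq_left (by linarith), max_eq_right zero_le_one]
  rcases lt_or_gt_of_ne ht₀ with ht | hgt
  · rw [sigmaSphere_real_sphereCap_of_mem_Ioo_neg hx ⟨hlt, ht⟩, hclamp ⟨hlt.le, by linarith⟩]
  rcases lt_or_gt_of_ne ht₁' with ht | ht
  · rw [sigmaSphere_real_sphereCap_of_mem_Ioo hx ⟨hgt, ht⟩, hclamp ⟨by linarith, ht.le⟩]
  · have : sphereCap x t = ∅ := eq_empty_of_forall_notMem fun w hw =>
      (inner_mem_Icc_of_mem_sphere hx w).2.not_gt (ht.trans hw)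
    simp only [this, measureReal_empty]
    rw [min_eq_right (by linarith), max_eq_left (by linarith)]

theorem sigmaSphere_real_sphereCap_of_mem_Icc {x : E³} (hx : ‖x‖ = 1) {t : ℝ}
    (ht : t ∈ Icc (-1) 1) : sigmaSphere.real (sphereCap x t) = (1 - t) / 2 := by
  rw [sigmaSphere_real_sphereCap hx, min_eq_right (by linarith [ht.1]),
    max_eq_right (by linarith [ht.2])]

theorem integral_inner_sigmaSphere {x : E³} (hx : ‖x‖ = 1) :
    ∫ w, ⟪x, (w : E³)⟫ ∂sigmaSphere = 0 := by
  have hint := (continuous_const.inner continuous_subtype_val :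
    Continuous fun w : S² => ⟪x, (w : E³)⟫).integrable_sigmaSphere
  have hcap : EqOn (fun t => sigmaSphere.real {w : S² | t < ⟪x, w⟫}) (fun t => (1 - t) / 2)
      (uIcc (-1) 1) := fun t ht =>
    sigmaSphere_real_sphereCap_of_mem_Icc hx (by rwa [uIcc_of_le (by norm_num)] at ht)
  have h := integral_sub_eq_intervalIntegral_measureReal_lt (by norm_num) hint
    (fun w => (inner_mem_Icc_of_mem_sphere hx w).1) (fun w => (inner_mem_Icc_of_mem_sphere hx w).2)
  rw [integral_sub hint (integrable_const _), intervalIntegral.integral_congr hcap,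
    intervalIntegral.integral_div, intervalIntegral.integral_sub intervalIntegrable_const
      intervalIntegral.intervalIntegrable_id] at h
  norm_num [integral_id] at h
  linarith

theorem integral_abs_inner_sigmaSphere_of_norm_eq_one {x : E³} (hx : ‖x‖ = 1) :
    ∫ w, |⟪x, (w : E³)⟫| ∂sigmaSphere = 1 / 2 := by
  have hint := (continuous_const.inner continuous_subtype_val).abs.integrable_sigmaSphere
    (f := fun w : S² => |⟪x, (w : E³)⟫|)
  have hcap : EqOn (fun t => sigmaSphere.real {w : S² | t < |⟪x, w⟫|}) (fun t => 1 - t)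
      (uIcc 0 1) := by
    intro t ht
    rw [uIcc_of_le zero_le_one] at ht
    have hunion : {w : S² | t < |⟪x, w⟫|} = sphereCap x t ∪ sphereCap (-x) t := by
      ext w
      simp [sphereCap, lt_abs, inner_neg_left]
    have hdisj : Disjoint (sphereCap x t) (sphereCap (-x) t) := by
      refine disjoint_left.2 fun w (hw : t < _) (hw' : t < _) => ?_
      rw [inner_neg_left] at hw'
      linarith [ht.1]
    have hIcc : t ∈ Icc (-1) 1 := ⟨by linarith [ht.1], ht.2⟩
    dsimp only
    rw [hunion, measureReal_union hdisj (measurableSet_sphereCap _ _),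
      sigmaSphere_real_sphereCap_of_mem_Icc hx hIcc,
      sigmaSphere_real_sphereCap_of_mem_Icc (by rwa [norm_neg]) hIcc]
    ring
  have h := integral_sub_eq_intervalIntegral_measureReal_lt zero_le_one hint
    (fun w => abs_nonneg _) (fun w => abs_le.2 (inner_mem_Icc_of_mem_sphere hx w))
  rw [intervalIntegral.integral_congr hcap, intervalIntegral.integral_sub intervalIntegrable_const
      intervalIntegral.intervalIntegrable_id] at h
  norm_num [integral_id] at h
  linarith

theorem integral_abs_inner_sigmaSphere (x : E³) :
    ∫ w, |⟪x, (w : E³)⟫| ∂sigmaSphere = ‖x‖ / 2 := by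
  rcases eq_or_ne x 0 with rfl | hx
  · simp
  have hx' : ‖x‖ ≠ 0 := norm_ne_zero_iff.2 hx
  have hscale (w : S²) : |⟪x, (w : E³)⟫| = ‖x‖ * |⟪‖x‖⁻¹ • x, (w : E³)⟫| := by
    rw [real_inner_smul_left, abs_mul, abs_inv, abs_norm, mul_inv_cancel_left₀ hx']
  simp_rw [hscale]
  rw [integral_const_mul, integral_abs_inner_sigmaSphere_of_norm_eq_one]
  · ring
  · rw [norm_smul, norm_inv, norm_norm, inv_mul_cancel₀ hx']

theorem integral_norm_sub_sigmaSphere (z : S²) :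
    ∫ w, ‖(z : E³) - (w : E³)‖ ∂sigmaSphere = 4 / 3 := by
  have hint := (continuous_const.sub continuous_subtype_val).norm.integrable_sigmaSphere
    (f := fun w : S² => ‖(z : E³) - (w : E³)‖)
  have hcap : EqOn (fun t => sigmaSphere.real {w : S² | t < ‖(z : E³) - w‖})
      (fun t => 1 - t ^ 2 / 4) (uIcc 0 2) := by
    intro t ht
    rw [uIcc_of_le zero_le_two] at ht
    have hset : {w : S² | t < ‖(z : E³) - w‖} = sphereCap (-(z : E³)) (t ^ 2 / 2 - 1) := by
      ext w
      simp only [mem_ofPred_eq, sphereCap]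
      rw [← sq_lt_sq₀ ht.1 (norm_nonneg _), norm_sub_sq_real, norm_eq_of_mem_sphere z,
        norm_eq_of_mem_sphere w, inner_neg_left]
      constructor <;> intro h <;> linarith
    dsimp only
    rw [hset, sigmaSphere_real_sphereCap_of_mem_Icc (by rw [norm_neg, norm_eq_of_mem_sphere z])
      ⟨by nlinarith [ht.1], by nlinarith [ht.1, ht.2]⟩]
    ring
  have h := integral_sub_eq_intervalIntegral_measureReal_lt zero_le_two hint
    (fun w => norm_nonneg _) fun w => (norm_sub_le _ _).trans (by
      rw [norm_eq_of_mem_sphere z, norm_eq_of_mem_sphere w]; norm_num)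
  rw [intervalIntegral.integral_congr hcap] at h
  norm_num [integral_id] at h
  linarith

theorem integral_min_inner_sigmaSphere {x y : E³} (hx : ‖x‖ = 1) (hy : ‖y‖ = 1) :
    ∫ w, min ⟪x, (w : E³)⟫ ⟪y, (w : E³)⟫ ∂sigmaSphere = -(‖x - y‖ / 4) := by
  have hmin (w : S²) : min ⟪x, (w : E³)⟫ ⟪y, (w : E³)⟫ =
      (⟪x, (w : E³)⟫ + ⟪y, (w : E³)⟫ - |⟪x - y, (w : E³)⟫|) / 2 := by
    rw [inner_sub_left]
    linarith [min_add_max ⟪x, (w : E³)⟫ ⟪y, (w : E³)⟫,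
      max_sub_min_eq_abs' ⟪x, (w : E³)⟫ ⟪y, (w : E³)⟫]
  have hint (v : E³) : Integrable (fun w : S² => ⟪v, (w : E³)⟫) sigmaSphere :=
    (continuous_const.inner continuous_subtype_val).integrable_sigmaSphere
  have hint_add : Integrable (fun w : S² => ⟪x, (w : E³)⟫ + ⟪y, (w : E³)⟫) sigmaSphere :=
    (hint x).add (hint y)
  simp_rw [hmin]
  rw [integral_div, integral_sub hint_add (hint _).abs, integral_add (hint x) (hint y),
    integral_inner_sigmaSphere hx, integral_inner_sigmaSphere hy, integral_abs_inner_sigmaSphere]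
  ring

theorem intervalIntegral_sigmaSphere_real_inter_sphereCap {x y : E³} (hx : ‖x‖ = 1)
    (hy : ‖y‖ = 1) :
    ∫ t in (-1 : ℝ)..1, sigmaSphere.real (sphereCap x t ∩ sphereCap y t) = 1 - ‖x - y‖ / 4 := by
  have hcont : Continuous fun w : S² => min ⟪x, (w : E³)⟫ ⟪y, (w : E³)⟫ :=
    (continuous_const.inner continuous_subtype_val).min
      (continuous_const.inner continuous_subtype_val)
  have h := integral_sub_eq_intervalIntegral_measureReal_lt (by norm_num)
    hcont.integrable_sigmaSphere
    (fun w => le_min (inner_mem_Icc_of_mem_sphere hx w).1 (inner_mem_Icc_of_mem_sphere hy w).1)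
    (fun w => (min_le_left _ _).trans (inner_mem_Icc_of_mem_sphere hx w).2)
  simp only [lt_min_iff] at h
  change ∫ t in (-1 : ℝ)..1, sigmaSphere.real {w : S² | t < ⟪x, w⟫ ∧ t < ⟪y, w⟫} = _
  rw [← h, integral_sub hcont.integrable_sigmaSphere (integrable_const _),
    integral_min_inner_sigmaSphere hx hy]
  simp only [integral_const, probReal_univ, smul_eq_mul]
  ring

theorem integral_sq_capDiscrepancy {N : ℕ} (hN : 0 < N) (z : Fin N → S²) {t : ℝ}
    (ht : t ∈ Icc (-1) 1) :
    ∫ w, |(∑ n, if t < ⟪(w : E³), z n⟫ then (1 : ℝ) else 0) / N -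
        (sigmaSphere {y : S² | t < ⟪(w : E³), y⟫}).toReal| ^ 2 ∂sigmaSphere =
      (∑ j, ∑ k, sigmaSphere.real (sphereCap (z j : E³) t ∩ sphereCap (z k) t)) / N ^ 2 -
        ((1 - t) / 2) ^ 2 := by
  have : Nonempty (Fin N) := ⟨⟨0, hN⟩⟩
  have hind (w : S²) (n : Fin N) : (if t < ⟪(w : E³), z n⟫ then (1 : ℝ) else 0) =
      (sphereCap (z n : E³) t).indicator 1 w := by
    simp [indicator, sphereCap, real_inner_comm]
  have hcap (w : S²) : (sigmaSphere {y : S² | t < ⟪(w : E³), y⟫}).toReal = (1 - t) / 2 :=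
    sigmaSphere_real_sphereCap_of_mem_Icc (norm_eq_of_mem_sphere w) ht
  have hmul (j k : Fin N) : (fun w => (sphereCap (z j : E³) t).indicator (1 : S² → ℝ) w *
      (sphereCap (z k : E³) t).indicator 1 w) =
        (sphereCap (z j : E³) t ∩ sphereCap (z k) t).indicator 1 := by
    rw [inter_indicator_one]
    rfl
  have hmeas (j k : Fin N) := (measurableSet_sphereCap (z j : E³) t).inter
    (measurableSet_sphereCap (z k : E³) t)
  simp_rw [hind, hcap, sq_abs]
  have h := integral_sq_average_sub (μ := sigmaSphere)
    (φ := fun n => (sphereCap (z n : E³) t).indicator 1) (c := (1 - t) / 2)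
    (fun n => (integrable_indicator_iff (measurableSet_sphereCap _ _)).2
      (integrable_const _).integrableOn)
    (fun j k => by
      simp only [hmul]
      exact (integrable_indicator_iff (hmeas j k)).2 (integrable_const _).integrableOn)
    (fun n => by
      rw [integral_indicator_one (measurableSet_sphereCap _ _),
        sigmaSphere_real_sphereCap_of_mem_Icc (norm_eq_of_mem_sphere (z n)) ht])
  simp only [hmul, integral_indicator_one (hmeas _ _), Fintype.card_fin] at h
  exact h

theorem intervalIntegral_integral_sq_capDiscrepancy {N : ℕ} (hN : 0 < N) (z : Fin N → S²) :
    ∫ t in (-1 : ℝ)..1, ∫ w, |(∑ n, if t < ⟪(w : E³), z n⟫ then (1 : ℝ) else 0) / N -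
        (sigmaSphere {y : S² | t < ⟪(w : E³), y⟫}).toReal| ^ 2 ∂sigmaSphere =
      (∑ j, ∑ k, (1 - ‖(z j : E³) - z k‖ / 4)) / N ^ 2 - 2 / 3 := by
  have hanti (j k : Fin N) :
      Antitone fun t => sigmaSphere.real (sphereCap (z j : E³) t ∩ sphereCap (z k) t) :=
    fun s t hst => measureReal_mono <|
      inter_subset_inter (antitone_sphereCap _ hst) (antitone_sphereCap _ hst)
  have hanti_sum (j : Fin N) : Antitone fun t =>
      ∑ k, sigmaSphere.real (sphereCap (z j : E³) t ∩ sphereCap (z k) t) :=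
    fun s t hst => Finset.sum_le_sum fun k _ => hanti j k hst
  have hanti_sum_sum : Antitone fun t =>
      ∑ j, ∑ k, sigmaSphere.real (sphereCap (z j : E³) t ∩ sphereCap (z k) t) :=
    fun s t hst => Finset.sum_le_sum fun j _ => hanti_sum j hst
  have hsq : ∫ t in (-1 : ℝ)..1, ((1 - t) / 2) ^ 2 = 2 / 3 := by
    simp_rw [div_pow, intervalIntegral.integral_div,
      intervalIntegral.integral_comp_sub_left (fun t => t ^ 2), integral_pow]
    norm_num
  rw [intervalIntegral.integral_congr fun t ht =>
      integral_sq_capDiscrepancy hN z (by rwa [uIcc_of_le (by norm_num)] at ht),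
    intervalIntegral.integral_sub (hanti_sum_sum.intervalIntegrable.div_const _)
      ((by fun_prop : Continuous fun t : ℝ => ((1 - t) / 2) ^ 2).intervalIntegrable _ _),
    intervalIntegral.integral_div,
    intervalIntegral.integral_finsetSum fun j _ => (hanti_sum j).intervalIntegrable, hsq]
  simp_rw [intervalIntegral.integral_finsetSum fun k _ => (hanti _ k).intervalIntegrable,
    intervalIntegral_sigmaSphere_real_inter_sphereCap (norm_eq_of_mem_sphere _)
      (norm_eq_of_mem_sphere _)]

/-- Stolarsky's invariance principle on `S²`. -/
theorem stolarsky_invariance (N : ℕ) (hN : 0 < N)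
    (z : Fin N → sphere (0 : EuclideanSpace ℝ (Fin 3)) 1) :
    ((1 / (N : ℝ) ^ 2) *
        ∑ j, ∑ k, ‖(z j : EuclideanSpace ℝ (Fin 3)) - (z k : EuclideanSpace ℝ (Fin 3))‖ +
      4 * ∫ t in (-1 : ℝ)..1, ∫ w,
        |(∑ n, if t < ⟪(w : EuclideanSpace ℝ (Fin 3)),
            (z n : EuclideanSpace ℝ (Fin 3))⟫ then (1 : ℝ) else 0) / N -
          (sigmaSphere {y : sphere (0 : EuclideanSpace ℝ (Fin 3)) 1 |
            t < ⟪(w : EuclideanSpace ℝ (Fin 3)), (y : EuclideanSpace ℝ (Fin 3))⟫}).toReal| ^ 2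
        ∂sigmaSphere =
      ∫ z', ∫ w', ‖(z' : EuclideanSpace ℝ (Fin 3)) - (w' : EuclideanSpace ℝ (Fin 3))‖
        ∂sigmaSphere ∂sigmaSphere) ∧
    (∫ z', ∫ w', ‖(z' : EuclideanSpace ℝ (Fin 3)) - (w' : EuclideanSpace ℝ (Fin 3))‖
        ∂sigmaSphere ∂sigmaSphere = 4 / 3) := by
  have henergy : ∫ z', ∫ w', ‖(z' : E³) - w'‖ ∂sigmaSphere ∂sigmaSphere = 4 / 3 := by
    simp [integral_norm_sub_sigmaSphere]
  refine ⟨?_, henergy⟩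
  rw [intervalIntegral_integral_sq_capDiscrepancy hN z, henergy]
  simp only [Finset.sum_sub_distrib, Finset.sum_const, Finset.card_univ, Fintype.card_fin,
    nsmul_eq_mul, ← Finset.sum_div]
  field_simp
  ring
end

section
/- For 0 < v < 1 and 0 < τ < 1, the cubic polynomial Q(x) = x³ + p x + q with p = −[(1−2v)² + B²(1+2H²)]/[B²(1+H²)] and q = 2(1−2v)(1−2τ)/[B(1+H²)], where B = √((1−v)v)/√((1−τ)τ) and H = 1−2τ, has positive discriminant −4p³ − 27q² > 0, and hence three distinct real roots. -/
/-!
With `a = 1 - 2v` and `b = B²`, clearing denominators turns the discriminant into a positive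
multiple of `(a² + b(1 + 2H²))³ - 27a²H²b²(1 + H²)`, which is positive by AM-GM applied to
`a² + 2 · b(1 + 2H²)/2`. A depressed cubic with positive discriminant
changes sign between its critical points, and dividing out the root found there leaves a
quadratic with positive discriminant.
-/

open Set

theorem twentyseven_mul_sq_mul_le_cube {x y : ℝ} (h : 0 ≤ 8 * x + y) :
    27 * x ^ 2 * y ≤ (2 * x + y) ^ 3 := by
  nlinarith [mul_nonneg (sq_nonneg (x - y)) h]

theorem curvature_disc_numerator_pos (a h : ℝ) {b : ℝ} (hb : 0 < b) :
    27 * a ^ 2 * h ^ 2 * b ^ 2 * (1 + h ^ 2) < (a ^ 2 + b * (1 + 2 * h ^ 2)) ^ 3 := by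
  rcases eq_or_ne a 0 with rfl | ha
  · norm_num
    positivity
  · have amgm := twentyseven_mul_sq_mul_le_cube (x := b * (1 + 2 * h ^ 2) / 2) (y := a ^ 2)
      (by positivity)
    -- `(1 + 2h²)² = 4h²(1 + h²) + 1`, so the AM-GM bound beats the left side by `27a²b²/4`.
    nlinarith [mul_pos (sq_pos_of_ne_zero ha) (pow_pos hb 2)]

theorem curvature_disc_pos (a h : ℝ) {B : ℝ} (hB : B ≠ 0) :
    0 < -4 * (-((a ^ 2 + B ^ 2 * (1 + 2 * h ^ 2)) / (B ^ 2 * (1 + h ^ 2)))) ^ 3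
      - 27 * (2 * a * h / (B * (1 + h ^ 2))) ^ 2 := by
  have hB2 : 0 < B ^ 2 := by positivity
  have disc_eq : -4 * (-((a ^ 2 + B ^ 2 * (1 + 2 * h ^ 2)) / (B ^ 2 * (1 + h ^ 2)))) ^ 3
      - 27 * (2 * a * h / (B * (1 + h ^ 2))) ^ 2 =
      4 * ((a ^ 2 + B ^ 2 * (1 + 2 * h ^ 2)) ^ 3 - 27 * a ^ 2 * h ^ 2 * (B ^ 2) ^ 2 * (1 + h ^ 2))
        / (B ^ 2 * (1 + h ^ 2)) ^ 3 := by
    field_simp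
    ring
  rw [disc_eq]
  exact div_pos (by linarith [curvature_disc_numerator_pos a h hB2]) (by positivity)

theorem exists_root_sq_lt_of_disc_pos {p q : ℝ} (h : 0 < -4 * p ^ 3 - 27 * q ^ 2) :
    ∃ r, r ^ 3 + p * r + q = 0 ∧ 3 * r ^ 2 + p < 0 := by
  have hp : p < 0 := by
    by_contra! hp
    nlinarith [pow_nonneg hp 3, sq_nonneg q]
  set m := Real.sqrt (-p / 3)
  have hm : 0 < m := Real.sqrt_pos.mpr (by linarith)
  have hm2 : m ^ 2 = -p / 3 := Real.sq_sqrt (by linarith)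
  -- At the critical points `±m` the cubic takes the values `q ± 2pm/3`,
  -- and `(2pm/3)² = -4p³/27 > q²`.
  have hq : |q| < -(2 * p * m / 3) := by
    apply abs_lt_of_sq_lt_sq _ (by nlinarith)
    nlinarith
  obtain ⟨r, hr, hr0⟩ : (0 : ℝ) ∈ (fun x => x ^ 3 + p * x + q) '' Ioo (-m) m := by
    refine intermediate_value_Ioo' (by linarith) (by fun_prop) ⟨?_, ?_⟩
    · nlinarith [abs_lt.mp hq]
    · nlinarith [abs_lt.mp hq]
  refine ⟨r, hr0, ?_⟩
  nlinarith [sq_lt_sq' hr.1 hr.2, abs_of_pos hm]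

theorem exists_three_roots_of_root {p q r : ℝ} (hr : r ^ 3 + p * r + q = 0)
    (hrp : 3 * r ^ 2 + p < 0) :
    ∃ x₁ x₂ x₃ : ℝ, x₁ ≠ x₂ ∧ x₁ ≠ x₃ ∧ x₂ ≠ x₃ ∧
      x₁ ^ 3 + p * x₁ + q = 0 ∧ x₂ ^ 3 + p * x₂ + q = 0 ∧ x₃ ^ 3 + p * x₃ + q = 0 := by
  -- The other two roots are those of the quotient `x² + r x + r² + p`,
  -- of discriminant `-3r² - 4p`.
  set s := Real.sqrt (-3 * r ^ 2 - 4 * p)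
  have hs2 : s ^ 2 = -3 * r ^ 2 - 4 * p := Real.sq_sqrt (by linarith [sq_nonneg r])
  have hs : 0 < s := Real.sqrt_pos.mpr (by linarith [sq_nonneg r])
  have h3r : |3 * r| < s := abs_lt_of_sq_lt_sq (by nlinarith) hs.le
  refine ⟨r, (-r + s) / 2, (-r - s) / 2, ?_, ?_, ?_, hr, ?_, ?_⟩
  · intro h; linarith [abs_lt.mp h3r]
  · intro h; linarith [abs_lt.mp h3r]
  · intro h; linarith
  · linear_combination hr + (s - 3 * r) / 8 * hs2
  · linear_combination hr + (-s - 3 * r) / 8 * hs2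

/-- The curvature polynomial `Q(x) = x³ + px + q` has positive discriminant, hence three
distinct real roots. -/
theorem curvature_cubic_discriminant (v τ : ℝ) (hv : v ∈ Set.Ioo (0 : ℝ) 1)
    (hτ : τ ∈ Set.Ioo (0 : ℝ) 1) :
    let B := Real.sqrt ((1 - v) * v) / Real.sqrt ((1 - τ) * τ)
    let H := 1 - 2 * τ
    let p := -(((1 - 2 * v) ^ 2 + B ^ 2 * (1 + 2 * H ^ 2)) / (B ^ 2 * (1 + H ^ 2)))
    let q := 2 * (1 - 2 * v) * (1 - 2 * τ) / (B * (1 + H ^ 2))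
    0 < -4 * p ^ 3 - 27 * q ^ 2 ∧
    ∃ x₁ x₂ x₃ : ℝ, x₁ ≠ x₂ ∧ x₁ ≠ x₃ ∧ x₂ ≠ x₃ ∧
      x₁ ^ 3 + p * x₁ + q = 0 ∧ x₂ ^ 3 + p * x₂ + q = 0 ∧ x₃ ^ 3 + p * x₃ + q = 0 := by
  intro B H p q
  have hB : B ≠ 0 := by
    have hv' : 0 < (1 - v) * v := mul_pos (by linarith [hv.2]) hv.1
    have hτ' : 0 < (1 - τ) * τ := mul_pos (by linarith [hτ.2]) hτ.1
    exact (div_pos (Real.sqrt_pos.mpr hv') (Real.sqrt_pos.mpr hτ')).ne'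
  have hdisc : 0 < -4 * p ^ 3 - 27 * q ^ 2 := curvature_disc_pos (1 - 2 * v) H hB
  obtain ⟨r, hr, hrp⟩ := exists_root_sq_lt_of_disc_pos hdisc
  exact ⟨hdisc, exists_three_roots_of_root hr hrp⟩
end
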